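/- arXiv:1601.00296 — 15 statements merged into one kernel-verified Lean document; each statement's English description precedes it below -/
import Mathlib

section
/- Every endomorphism of an infinite-dimensional vector space over a field is the sum of four square-zero endomorphisms. -/
/-!
Write `V ≅ W × W` with `W = ℕ →₀ V`, and let `M` be the backward shift of `W`. It is locally
nilpotent, so `1 - M` is invertible, and every endomorphism `τ` of `W` is a commutator
`M θ - θ M`. An endomorphism that exchanges two complementary subspaces `p` and `q` is the sum of
the two square-zero maps `f ∘ π_p` and `f ∘ π_q`. If `u` has diagonal blocks `A` and `D`, then
`w = [[A, B], [M A + M B - D, D]]` with `M B - B M = A + D - M A - D M` exchanges the graphs of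
`id` and `M`, which are complementary because `1 - M` is invertible, while `u - w` exchanges
`W × 0` and `0 × W`.
-/

open LinearMap

def Module.End.IsLocallyNilpotent {R W : Type*} [Semiring R] [AddCommMonoid W] [Module R W]
    (M : Module.End R W) : Prop :=
  ∀ x, ∃ n : ℕ, (M ^ n) x = 0

section

variable {R W : Type*} [Ring R] [AddCommGroup W] [Module R W]

theorem Module.End.IsLocallyNilpotent.bijective_one_sub {M : Module.End R W}
    (hM : M.IsLocallyNilpotent) : Function.Bijective ⇑(1 - M : Module.End R W) := by
  refine ⟨(injective_iff_map_eq_zero _).2 fun x hx => ?_, fun y => ?_⟩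
  · obtain ⟨n, hn⟩ := hM x
    have := congr($(geom_sum_mul_neg M n) x)
    rwa [Module.End.mul_apply, hx, map_zero, LinearMap.sub_apply, hn, sub_zero, one_apply,
      eq_comm] at this
  · obtain ⟨n, hn⟩ := hM y
    refine ⟨(∑ i ∈ Finset.range n, M ^ i) y, ?_⟩
    rw [← Module.End.mul_apply, mul_neg_geom_sum, LinearMap.sub_apply, hn, sub_zero, one_apply]

theorem exists_sum_two_sq_zero_of_isCompl {p q : Submodule R W} (hpq : IsCompl p q)
    (f : Module.End R W) (hp : ∀ x ∈ p, f x ∈ q) (hq : ∀ x ∈ q, f x ∈ p) :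
    ∃ a b : Module.End R W, f = a + b ∧ a * a = 0 ∧ b * b = 0 := by
  refine ⟨f * p.projection q hpq, f * q.projection p hpq.symm, ?_, ?_, ?_⟩
  · rw [← mul_add, Submodule.projection_add_projection_eq_id, Module.End.mul_eq_comp, comp_id]
  · ext x
    simp [Submodule.projection_apply_of_mem_right hpq (hp _ (Submodule.projection_apply_mem hpq x))]
  · ext x
    simp [Submodule.projection_apply_of_mem_right hpq.symm
      (hq _ (Submodule.projection_apply_mem hpq.symm x))]

theorem LinearMap.isCompl_graph_of_bijective_sub {W' : Type*} [AddCommGroup W'] [Module R W']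
    {f g : W →ₗ[R] W'} (h : Function.Bijective ⇑(f - g)) : IsCompl f.graph g.graph := by
  constructor
  · rw [Submodule.disjoint_def]
    rintro ⟨x, y⟩ hf hg
    rw [mem_graph_iff] at hf hg
    obtain rfl : x = 0 := h.1 <| by simp [← hf, ← hg]
    simpa using hf
  · rw [codisjoint_iff, Submodule.eq_top_iff']
    rintro ⟨a, b⟩
    obtain ⟨x, hx⟩ := h.2 (b - g a)
    refine Submodule.mem_sup.2 ⟨(x, f x), rfl, (a - x, g (a - x)), rfl, ?_⟩
    rw [LinearMap.sub_apply] at hx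
    ext
    · simp
    · simp only [Prod.snd_add, map_sub]
      linear_combination (norm := module) hx

theorem exists_sum_four_sq_zero_of_surjective_commutator {M : Module.End R W}
    (hM : Function.Bijective ⇑(1 - M : Module.End R W))
    (hcomm : ∀ τ : Module.End R W, ∃ θ, M * θ - θ * M = τ) (u : Module.End R (W × W)) :
    ∃ a b c d : Module.End R (W × W),
      u = a + b + c + d ∧ a * a = 0 ∧ b * b = 0 ∧ c * c = 0 ∧ d * d = 0 := by
  set A := fst R W W ∘ₗ u ∘ₗ inl R W W
  set D := snd R W W ∘ₗ u ∘ₗ inr R W W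
  obtain ⟨B, hB⟩ := hcomm (A + D - M * A - D * M)
  set w := (A.coprod B).prod ((M * A + M * B - D).coprod D)
  obtain ⟨a, b, hab, ha, hb⟩ := exists_sum_two_sq_zero_of_isCompl isCompl_range_inl_inr (u - w)
    (by rintro _ ⟨x, rfl⟩; simp [range_inr, w, A])
    (by rintro _ ⟨y, rfl⟩; simp [range_inl, w, D, Prod.mk_zero_zero])
  have hw : ∀ x y, w (x, y) = (A x + B y, M (A x) + M (B x) - D x + D y) := fun x y => by simp [w]
  obtain ⟨c, d, hcd, hc, hd⟩ := exists_sum_two_sq_zero_of_isCompl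
    (LinearMap.isCompl_graph_of_bijective_sub (f := LinearMap.id) hM) w
    (by rintro ⟨x, y⟩ (rfl : y = x); rw [mem_graph_iff, hw]; simp)
    (by rintro ⟨x, y⟩ (rfl : y = M x)
        have hBx : M (B x) - B (M x) = A x + D x - M (A x) - D (M x) := by
          simpa using congr($hB x)
        rw [mem_graph_iff, hw]
        dsimp only [id_coe, id_eq]
        linear_combination (norm := module) hBx)
  exact ⟨a, b, c, d, by rw [add_assoc (a + b), ← hab, ← hcd, sub_add_cancel], ha, hb, hc, hd⟩

end

section Shift

variable (R Z : Type*) [Semiring R] [AddCommMonoid Z] [Module R Z]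

noncomputable def shiftDown : Module.End R (ℕ →₀ Z) :=
  Finsupp.lcomapDomain (· + 1) (add_left_injective 1)

noncomputable def shiftUp : Module.End R (ℕ →₀ Z) :=
  Finsupp.lmapDomain Z R (· + 1)

variable {R Z}

@[simp]
theorem shiftDown_apply (x : ℕ →₀ Z) (n : ℕ) : shiftDown R Z x n = x (n + 1) := rfl

theorem shiftDown_single_zero (z : Z) : shiftDown R Z (Finsupp.single 0 z) = 0 := by
  ext n
  simp

theorem shiftDown_single_succ (n : ℕ) (z : Z) :
    shiftDown R Z (Finsupp.single (n + 1) z) = Finsupp.single n z := by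
  ext m
  simp [Finsupp.single_apply]

theorem shiftUp_single (n : ℕ) (z : Z) :
    shiftUp R Z (Finsupp.single n z) = Finsupp.single (n + 1) z :=
  Finsupp.mapDomain_single

theorem shiftDown_mul_shiftUp : shiftDown R Z * shiftUp R Z = 1 :=
  Finsupp.lhom_ext fun n z => by
    rw [Module.End.mul_apply, shiftUp_single, shiftDown_single_succ, Module.End.one_apply]

theorem shiftDown_shiftUp (x : ℕ →₀ Z) : shiftDown R Z (shiftUp R Z x) = x := by
  rw [← Module.End.mul_apply, shiftDown_mul_shiftUp, Module.End.one_apply]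

theorem shiftDown_shiftUp_pow_succ (k : ℕ) (x : ℕ →₀ Z) :
    shiftDown R Z ((shiftUp R Z ^ (k + 1)) x) = (shiftUp R Z ^ k) x := by
  rw [← Module.End.mul_apply, pow_succ', ← mul_assoc, shiftDown_mul_shiftUp, one_mul]

theorem shiftDown_pow_apply (k : ℕ) (x : ℕ →₀ Z) (n : ℕ) :
    (shiftDown R Z ^ k) x n = x (n + k) := by
  induction k generalizing x n with
  | zero => rfl
  | succ k ih => rw [pow_succ, Module.End.mul_apply, ih, shiftDown_apply, add_assoc]

theorem isLocallyNilpotent_shiftDown : (shiftDown R Z).IsLocallyNilpotent := fun x => by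
  obtain ⟨k, hk⟩ := x.support.exists_nat_subset_range
  refine ⟨k, Finsupp.ext fun n => ?_⟩
  rw [shiftDown_pow_apply, Finsupp.coe_zero, Pi.zero_apply, ← Finsupp.notMem_support_iff]
  exact fun h => by simpa using hk h

end Shift

open Finset in
theorem exists_shiftDown_mul_sub_mul_shiftDown_eq {R Z : Type*} [Ring R] [AddCommGroup Z]
    [Module R Z] (τ : Module.End R (ℕ →₀ Z)) :
    ∃ θ, shiftDown R Z * θ - θ * shiftDown R Z = τ := by
  -- With `S = shiftUp`, `M = shiftDown`: `θ = ∑ₖ Sᵏ⁺¹ τ Mᵏ` solves `θ = S (τ + θ M)`,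
  -- hence `M θ = τ + θ M` as `M S = 1`.
  refine ⟨Finsupp.lsum ℕ fun n => ∑ p ∈ antidiagonal n,
    (shiftUp R Z ^ (p.2 + 1)) ∘ₗ τ ∘ₗ Finsupp.lsingle p.1, ?_⟩
  rw [sub_eq_iff_eq_add]
  refine Finsupp.lhom_ext fun n z => ?_
  cases n with
  | zero => simp [shiftDown_single_zero, shiftDown_shiftUp]
  | succ n =>
    simp [shiftDown_single_succ, shiftDown_shiftUp_pow_succ, shiftDown_shiftUp,
      Nat.sum_antidiagonal_succ']

/-- Every endomorphism of an infinite-dimensional vector space over a field is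
the sum of four square-zero endomorphisms. -/
theorem sum_four_square_zero (F : Type*) [Field F] (V : Type*) [AddCommGroup V]
    [Module F V] (hV : ¬ Module.Finite F V) (u : Module.End F V) :
    ∃ a b c d : Module.End F V,
      u = a + b + c + d ∧ a * a = 0 ∧ b * b = 0 ∧ c * c = 0 ∧ d * d = 0 := by
  have hrank : Cardinal.aleph0 ≤ Module.rank F V := not_lt.1 (mt Module.rank_lt_aleph0_iff.1 hV)
  obtain ⟨e⟩ : Nonempty (V ≃ₗ[F] (ℕ →₀ V) × (ℕ →₀ V)) := nonempty_linearEquiv_of_rank_eq <| by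
    simp [Cardinal.aleph0_mul_eq hrank, Cardinal.add_eq_self hrank]
  obtain ⟨a, b, c, d, hu, ha, hb, hc, hd⟩ := exists_sum_four_sq_zero_of_surjective_commutator
    isLocallyNilpotent_shiftDown.bijective_one_sub exists_shiftDown_mul_sub_mul_shiftDown_eq
    (e.conjRingEquiv u)
  let φ := e.conjRingEquiv.symm
  refine ⟨φ a, φ b, φ c, φ d, ?_, by rw [← map_mul, ha, map_zero], by rw [← map_mul, hb, map_zero],
    by rw [← map_mul, hc, map_zero], by rw [← map_mul, hd, map_zero]⟩
  rw [← map_add, ← map_add, ← map_add, ← hu, RingEquiv.symm_apply_apply]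
end

section
/- Every endomorphism of an infinite-dimensional vector space over a field is the sum of four idempotent endomorphisms. -/
/-!
Writing `ι` for a basis index of `V`, infinite because `V` is, we have `V ≅ W × W` with
`W = ℕ × ι →₀ F`, so that `End V ≅ M₂(End W)`. Every endomorphism `G` of `W` is a commutator
`⁅S, B⁆`, with `S` the shift in the `ℕ` coordinate: `B` is found on the `n`-th layer by the
recursion `B ∘ S = S ∘ B - G`. A `2 × 2` matrix over a ring whose trace minus `4` is a
commutator is a sum of four idempotents, each a column times a row whose product is `1`.
-/

open Matrix

theorem Matrix.isIdempotentElem_vecMulVec {n A : Type*} [Fintype n] [Ring A] {u v : n → A}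
    (h : v ⬝ᵥ u = 1) : IsIdempotentElem (vecMulVec u v) := by
  rw [IsIdempotentElem, vecMulVec_mul_vecMulVec, h, one_smul]

theorem Matrix.exists_four_isIdempotentElem_of_lie_eq_trace_sub_four {A : Type*} [Ring A]
    (M : Matrix (Fin 2) (Fin 2) A) {S B : A} (h : ⁅S, B⁆ = M.trace - 4) :
    ∃ p q r s : Matrix (Fin 2) (Fin 2) A, M = p + q + r + s ∧
      IsIdempotentElem p ∧ IsIdempotentElem q ∧ IsIdempotentElem r ∧ IsIdempotentElem s := by
  rw [Ring.lie_def, trace_fin_two, sub_eq_iff_eq_add] at h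
  -- The free entries of `q` and `r` absorb the off-diagonal entries of `M`; `γ` is chosen so
  -- that the `(0, 0)` entries match, and `h` then makes the `(1, 1)` entries match.
  set γ := M 0 0 - 2 + B * S
  refine ⟨vecMulVec ![1, S] ![1 - B * S, B],
    vecMulVec ![0, 1] ![M 1 0 - γ - S * (1 - B * S), 1],
    vecMulVec ![1, 0] ![1, M 0 1 - B - (1 - γ)],
    vecMulVec ![1, 1] ![γ, 1 - γ], ?_,
    isIdempotentElem_vecMulVec ?_, isIdempotentElem_vecMulVec ?_,
    isIdempotentElem_vecMulVec ?_, isIdempotentElem_vecMulVec ?_⟩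
  · ext i j
    fin_cases i <;> fin_cases j <;>
      simp only [Fin.zero_eta, Fin.mk_one, add_apply, vecMulVec_apply, cons_val_zero,
        cons_val_one, h] <;>
      grind
  all_goals simp [dotProduct]

theorem Module.End.exists_lie_eq_of_finsupp_nat_prod {R M ι : Type*} [Ring R] [AddCommGroup M]
    [Module R M] (G : Module.End R (ℕ × ι →₀ M)) :
    ∃ S B : Module.End R (ℕ × ι →₀ M), ⁅S, B⁆ = G := by
  let S : Module.End R (ℕ × ι →₀ M) := Finsupp.lmapDomain M R (Prod.map Nat.succ id)
  have hS (n : ℕ) (i : ι) : S ∘ₗ Finsupp.lsingle (n, i) = Finsupp.lsingle (n + 1, i) := by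
    ext; simp [S]
  let b (x : ℕ × ι) : M →ₗ[R] ℕ × ι →₀ M :=
    Nat.rec 0 (fun k bk => S ∘ₗ bk - G ∘ₗ Finsupp.lsingle (k, x.2)) x.1
  refine ⟨S, Finsupp.lsum ℕ b, Finsupp.lhom_ext' fun ⟨n, i⟩ => ?_⟩
  rw [Ring.lie_def, LinearMap.sub_comp, Module.End.mul_eq_comp, Module.End.mul_eq_comp,
    LinearMap.comp_assoc, LinearMap.comp_assoc, hS, Finsupp.lsum_comp_lsingle,
    Finsupp.lsum_comp_lsingle]
  change S ∘ₗ b (n, i) - (S ∘ₗ b (n, i) - G ∘ₗ Finsupp.lsingle (n, i)) = _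
  abel

theorem nonempty_equiv_fin_two_prod_nat_prod (ι : Type*) [Infinite ι] :
    Nonempty (ι ≃ Fin 2 × (ℕ × ι)) := by
  rw [← Cardinal.eq]
  simp only [Cardinal.mk_prod, Cardinal.mk_fintype, Fintype.card_fin, Nat.cast_ofNat,
    Cardinal.lift_ofNat, Cardinal.mk_eq_aleph0, Cardinal.lift_aleph0, Cardinal.lift_uzero,
    Cardinal.aleph0_le_mk, Cardinal.aleph0_mul_eq]
  exact (Cardinal.mul_eq_right (Cardinal.aleph0_le_mk ι)
    (Cardinal.ofNat_le_aleph0.trans (Cardinal.aleph0_le_mk ι)) two_ne_zero).symm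

theorem Module.Basis.nonempty_linearEquiv_fin_two_pi {R V ι : Type*} [Ring R] [AddCommGroup V]
    [Module R V] [Infinite ι] (b : Module.Basis ι R V) :
    Nonempty (V ≃ₗ[R] (Fin 2 → ℕ × ι →₀ R)) := by
  obtain ⟨σ⟩ := nonempty_equiv_fin_two_prod_nat_prod ι
  exact ⟨b.repr ≪≫ₗ Finsupp.domLCongr σ ≪≫ₗ Finsupp.curryLinearEquiv R ≪≫ₗ
    Finsupp.linearEquivFunOnFinite R _ (Fin 2)⟩

/-- Every endomorphism of an infinite-dimensional vector space over a field is
the sum of four idempotent endomorphisms. -/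
theorem sum_four_idempotents (F : Type*) [Field F] (V : Type*) [AddCommGroup V]
    [Module F V] (hV : ¬ Module.Finite F V) (u : Module.End F V) :
    ∃ p q r s : Module.End F V,
      u = p + q + r + s ∧ p * p = p ∧ q * q = q ∧ r * r = r ∧ s * s = s := by
  let ι := Module.Free.ChooseBasisIndex F V
  have : Infinite ι :=
    not_finite_iff_infinite.mp fun _ => hV (.of_basis (Module.Free.chooseBasis F V))
  obtain ⟨e⟩ := (Module.Free.chooseBasis F V).nonempty_linearEquiv_fin_two_pi
  let Φ := e.conjRingEquiv.trans (endVecRingEquivMatrixEnd (Fin 2) F (ℕ × ι →₀ F))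
  obtain ⟨S, B, hSB⟩ := Module.End.exists_lie_eq_of_finsupp_nat_prod ((Φ u).trace - 4)
  obtain ⟨p, q, r, s, hsum, hp, hq, hr, hs⟩ :=
    (Φ u).exists_four_isIdempotentElem_of_lie_eq_trace_sub_four hSB
  refine ⟨Φ.symm p, Φ.symm q, Φ.symm r, Φ.symm s, ?_, hp.map Φ.symm, hq.map Φ.symm,
    hr.map Φ.symm, hs.map Φ.symm⟩
  rw [← map_add, ← map_add, ← map_add, ← hsum, RingEquiv.symm_apply_apply]
end

section
/- Let p1 and p2 be split (i.e., products of linear factors) polynomials of degree 2 over a field F. Every elementary endomorphism u of an F-vector space V can be written as u = u1 + u2 with p1(u1) = 0 and p2(u2) = 0. -/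
/-!
Being a `(p₁, p₂)`-sum (`IsPolySum`) is preserved by algebra homomorphisms, and an elementary
`u` is the image of multiplication by `X` on `F[X]` under one (conjugate by `V ≃ ι →₀ F[X]` and
act coordinatewise). So it suffices to split multiplication by `X` when `p₁ = (X - a)(X - b)`
and `p₂ = (X - c)(X - d)`. On `ℕ →₀ F` with basis `(eₙ)`, `oddBlockCompanion a b` has the
eigenvector `e₀` (eigenvalue `a`) and acts on each plane `⟨e₂ₖ₊₁, e₂ₖ₊₂⟩` by the companion
matrix of `(X - a)(X - b)`, while `evenBlockCompanion c d` acts on each plane `⟨e₂ₖ, e₂ₖ₊₁⟩` by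
that of `(X - c)(X - d)`. Their sum `τ` sends `eₙ` to `eₙ₊₁` plus a combination of `e₀, …, eₙ`,
so `e₀` is a cyclic vector and `p ↦ p(τ) e₀` is an isomorphism `F[X] ≃ ℕ →₀ F` carrying
multiplication by `X` to `τ`.
-/

/-- An endomorphism `u` of an `F`-vector space `V` is elementary if `V`,
viewed as an `F[t]`-module where `t` acts as `u`, is a free `F[t]`-module. -/
def IsElementary {F : Type*} [Field F] {V : Type*} [AddCommGroup V] [Module F V]
    (u : Module.End F V) : Prop :=
  Module.Free (Polynomial F) (Module.AEval' u)

open Polynomial Submodule Finsupp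

section IsPolySum

variable {R A B : Type*} [CommSemiring R] [Semiring A] [Algebra R A] [Semiring B] [Algebra R B]

def IsPolySum (p₁ p₂ : R[X]) (u : A) : Prop :=
  ∃ u₁ u₂ : A, u = u₁ + u₂ ∧ aeval u₁ p₁ = 0 ∧ aeval u₂ p₂ = 0

variable {p₁ p₂ q₁ q₂ : R[X]} {u : A}

theorem IsPolySum.map {G : Type*} [FunLike G A B] [AlgHomClass G R A B] (h : IsPolySum p₁ p₂ u)
    (φ : G) : IsPolySum p₁ p₂ (φ u) := by
  obtain ⟨u₁, u₂, rfl, h₁, h₂⟩ := h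
  exact ⟨φ u₁, φ u₂, map_add φ u₁ u₂, by rw [aeval_algHom_apply, h₁, map_zero],
    by rw [aeval_algHom_apply, h₂, map_zero]⟩

theorem IsPolySum.of_dvd (h : IsPolySum p₁ p₂ u) (h₁ : p₁ ∣ q₁) (h₂ : p₂ ∣ q₂) :
    IsPolySum q₁ q₂ u := by
  obtain ⟨u₁, u₂, rfl, hu₁, hu₂⟩ := h
  exact ⟨u₁, u₂, rfl, aeval_eq_zero_of_dvd_aeval_eq_zero h₁ hu₁,
    aeval_eq_zero_of_dvd_aeval_eq_zero h₂ hu₂⟩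

end IsPolySum

section mapRange

variable {R M : Type*} [CommSemiring R] [AddCommMonoid M] [Module R M]

noncomputable def Finsupp.mapRange.endAlgHom (ι : Type*) :
    Module.End R M →ₐ[R] Module.End R (ι →₀ M) where
  toFun := Finsupp.mapRange.linearMap
  map_one' := Finsupp.mapRange.linearMap_id
  map_mul' f g := Finsupp.mapRange.linearMap_comp f g
  map_zero' := by ext; simp
  map_add' f g := by ext; simp
  commutes' r := by ext; simp

@[simp]
theorem Finsupp.mapRange.endAlgHom_apply (ι : Type*) (f : Module.End R M) :
    Finsupp.mapRange.endAlgHom ι f = Finsupp.mapRange.linearMap f := rfl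

end mapRange

theorem exists_X_sub_C_mul_X_sub_C_dvd {F : Type*} [Field F] {p : F[X]} (hs : p.Splits)
    (hd : p.degree = 2) : ∃ a b, (X - C a) * (X - C b) ∣ p := by
  have hcard : p.roots.card = 2 := by
    rw [← hs.natDegree_eq_card_roots, natDegree_eq_of_degree_eq_some hd]
  obtain ⟨a, b, hab⟩ := Multiset.card_eq_two.mp hcard
  refine ⟨a, b, ?_⟩
  simpa [hab] using prod_multiset_X_sub_C_dvd p

theorem aeval_X_sub_C_mul_X_sub_C_eq_zero_of_basis {R M ι : Type*} [CommRing R] [AddCommGroup M]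
    [Module R M] (bas : Module.Basis ι R M) {f : Module.End R M} {a b : R}
    (h : ∀ i, f (f (bas i)) = (a + b) • f (bas i) - (a * b) • bas i) :
    aeval f ((X - C a) * (X - C b)) = 0 := by
  refine bas.ext fun i => ?_
  simp only [map_mul, map_sub, aeval_X, aeval_C, Module.End.mul_apply, LinearMap.sub_apply,
    Module.algebraMap_end_apply, map_smul, h, LinearMap.zero_apply]
  module

section Hessenberg

variable {R M : Type*} [CommRing R] [AddCommGroup M] [Module R M] (T : Module.End R M)

noncomputable def cyclicMap (v : M) : R[X] →ₗ[R] M :=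
  LinearMap.applyₗ v ∘ₗ (aeval T).toLinearMap

@[simp]
theorem cyclicMap_apply (v : M) (p : R[X]) : cyclicMap T v p = aeval T p v := rfl

variable {T} {b : Module.Basis ℕ R M}
variable (hT : ∀ n, T (b n) - b (n + 1) ∈ span R (b '' Set.Iic n))
include hT

theorem map_span_basis_Iio_le (n : ℕ) :
    (span R (b '' Set.Iio n)).map T ≤ span R (b '' Set.Iio (n + 1)) := by
  rw [map_span_le]
  rintro _ ⟨i, hi, rfl⟩
  rw [← sub_add_cancel (T (b i)) (b (i + 1))]
  refine add_mem (span_mono (Set.image_mono ?_) (hT i)) (subset_span ⟨i + 1, ?_, rfl⟩)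
  · exact Set.Iic_subset_Iio.mpr (Nat.lt_succ_of_lt hi)
  · exact Nat.succ_lt_succ hi

theorem cyclicMap_X_pow_sub_mem (n : ℕ) :
    cyclicMap T (b 0) (X ^ n) - b n ∈ span R (b '' Set.Iio n) := by
  induction n with
  | zero => simp
  | succ n ih =>
    have : cyclicMap T (b 0) (X ^ (n + 1)) - b (n + 1)
        = T (cyclicMap T (b 0) (X ^ n) - b n) + (T (b n) - b (n + 1)) := by
      simp [pow_succ', Module.End.mul_apply]
    rw [this]
    refine add_mem (map_span_basis_Iio_le hT n (mem_map_of_mem ih)) ?_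
    rw [Set.Iio_add_one_eq_Iic]
    exact hT n

theorem cyclicMap_mem_span_of_degree_lt {p : R[X]} {n : ℕ} (hp : p.degree < n) :
    cyclicMap T (b 0) p ∈ span R (b '' Set.Iio n) := by
  classical
  rw [← mem_degreeLT, degreeLT_eq_span_X_pow] at hp
  refine (map_span_le _ _ _).mpr ?_ (mem_map_of_mem hp)
  intro _ hq
  obtain ⟨i, hi, rfl⟩ := Finset.mem_image.mp hq
  rw [← sub_add_cancel (cyclicMap T (b 0) (X ^ i)) (b i)]
  refine add_mem (span_mono (Set.image_mono ?_) (cyclicMap_X_pow_sub_mem hT i))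
    (subset_span ⟨i, Finset.mem_range.mp hi, rfl⟩)
  exact Set.Iio_subset_Iio (Finset.mem_range.mp hi).le

theorem cyclicMap_surjective : Function.Surjective (cyclicMap T (b 0)) := by
  have hb : ∀ n, b n ∈ LinearMap.range (cyclicMap T (b 0)) := by
    intro n
    induction n using Nat.strong_induction_on with
    | _ n ih =>
      rw [← sub_sub_cancel (cyclicMap T (b 0) (X ^ n)) (b n)]
      refine sub_mem (LinearMap.mem_range_self _ _) ?_
      refine span_le.mpr ?_ (cyclicMap_X_pow_sub_mem hT n)
      rintro _ ⟨i, hi, rfl⟩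
      exact ih i hi
  rw [← LinearMap.range_eq_top, eq_top_iff, ← b.span_eq, span_le]
  rintro _ ⟨n, rfl⟩
  exact hb n

theorem cyclicMap_injective : Function.Injective (cyclicMap T (b 0)) := by
  rw [← LinearMap.ker_eq_bot, LinearMap.ker_eq_bot']
  intro p hp
  by_contra hp0
  set d := p.natDegree
  have hlow : cyclicMap T (b 0) p - p.leadingCoeff • b d ∈ span R (b '' Set.Iio d) := by
    have : cyclicMap T (b 0) p - p.leadingCoeff • b d =
        p.leadingCoeff • (cyclicMap T (b 0) (X ^ d) - b d) + cyclicMap T (b 0) p.eraseLead := by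
      rw [← self_sub_C_mul_X_pow, map_sub, smul_sub]
      simp only [cyclicMap_apply, map_mul, aeval_C, Module.End.mul_apply,
        Module.algebraMap_end_apply]
      abel
    rw [this]
    refine add_mem (smul_mem _ _ (cyclicMap_X_pow_sub_mem hT d))
      (cyclicMap_mem_span_of_degree_lt hT ?_)
    rw [← degree_eq_natDegree hp0]
    exact degree_eraseLead_lt hp0
  have hd : d ∉ ((b.repr (cyclicMap T (b 0) p - p.leadingCoeff • b d)).support : Set ℕ) :=
    fun h => lt_irrefl d (b.repr_support_subset_of_mem_span _ hlow h)
  simp [hp, hp0] at hd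

theorem exists_conjAlgEquiv_mulLeft_X_eq :
    ∃ e : R[X] ≃ₗ[R] M, e.conjAlgEquiv R (LinearMap.mulLeft R X) = T := by
  let e := LinearEquiv.ofBijective _ ⟨cyclicMap_injective hT, cyclicMap_surjective hT⟩
  refine ⟨e, LinearMap.ext fun v => ?_⟩
  obtain ⟨p, rfl⟩ := e.surjective v
  simp only [LinearEquiv.conjAlgEquiv_apply, LinearMap.comp_apply, LinearEquiv.coe_coe,
    LinearEquiv.symm_apply_apply, LinearMap.mulLeft_apply]
  change aeval T (X * p) (b 0) = T (aeval T p (b 0))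
  simp [Module.End.mul_apply]

end Hessenberg

section Model

variable {R : Type*} [CommRing R] (a b : R)

noncomputable def evenBlockCompanion : Module.End R (ℕ →₀ R) :=
  linearCombination R fun n =>
    if n % 2 = 0 then single (n + 1) 1 else (a + b) • single n 1 - (a * b) • single (n - 1) 1

noncomputable def oddBlockCompanion : Module.End R (ℕ →₀ R) :=
  linearCombination R fun n =>
    if n = 0 then a • single 0 1
    else if n % 2 = 1 then single (n + 1) 1
    else (a + b) • single n 1 - (a * b) • single (n - 1) 1

variable {a b} {n : ℕ}

theorem evenBlockCompanion_single_of_even (h : n % 2 = 0) :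
    evenBlockCompanion a b (single n 1) = single (n + 1) 1 := by
  simp [evenBlockCompanion, h]

theorem evenBlockCompanion_single_of_odd (h : n % 2 = 1) :
    evenBlockCompanion a b (single n 1) =
      (a + b) • single n 1 - (a * b) • single (n - 1) 1 := by
  simp [evenBlockCompanion, h]

theorem oddBlockCompanion_single_zero : oddBlockCompanion a b (single 0 1) = a • single 0 1 := by
  simp [oddBlockCompanion]

theorem oddBlockCompanion_single_of_odd (h : n % 2 = 1) :
    oddBlockCompanion a b (single n 1) = single (n + 1) 1 := by
  simp [oddBlockCompanion, h, show n ≠ 0 by omega]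

theorem oddBlockCompanion_single_of_even (h : n % 2 = 0) (h0 : n ≠ 0) :
    oddBlockCompanion a b (single n 1) =
      (a + b) • single n 1 - (a * b) • single (n - 1) 1 := by
  simp [oddBlockCompanion, h, h0]

variable (a b n)

theorem evenBlockCompanion_sq :
    evenBlockCompanion a b (evenBlockCompanion a b (single n 1)) =
      (a + b) • evenBlockCompanion a b (single n 1) - (a * b) • single n 1 := by
  rcases Nat.mod_two_eq_zero_or_one n with h | h
  · simp only [evenBlockCompanion_single_of_even h,
      evenBlockCompanion_single_of_odd (show (n + 1) % 2 = 1 by omega), Nat.add_sub_cancel]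
  · have h1 : (n - 1) % 2 = 0 := by omega
    simp only [evenBlockCompanion_single_of_odd h, map_sub, map_smul,
      evenBlockCompanion_single_of_even h1, Nat.sub_add_cancel (show 1 ≤ n by omega)]

theorem oddBlockCompanion_sq :
    oddBlockCompanion a b (oddBlockCompanion a b (single n 1)) =
      (a + b) • oddBlockCompanion a b (single n 1) - (a * b) • single n 1 := by
  rcases Nat.mod_two_eq_zero_or_one n with h | h
  · rcases eq_or_ne n 0 with rfl | h0
    · simp only [oddBlockCompanion_single_zero, map_smul]
      module
    · simp only [oddBlockCompanion_single_of_even h h0, map_sub, map_smul,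
        oddBlockCompanion_single_of_odd (show (n - 1) % 2 = 1 by omega),
        Nat.sub_add_cancel (show 1 ≤ n by omega)]
  · simp only [oddBlockCompanion_single_of_odd h,
      oddBlockCompanion_single_of_even (show (n + 1) % 2 = 0 by omega) n.succ_ne_zero,
      Nat.add_sub_cancel]

theorem oddBlockCompanion_add_evenBlockCompanion_single_sub_mem (c d : R) :
    (oddBlockCompanion a b + evenBlockCompanion c d) (single n 1) - single (n + 1) 1 ∈
      supported R R (Set.Iic n) := by
  have hlow (r s : R) : r • single n 1 - s • single (n - 1) 1 ∈ supported R R (Set.Iic n) :=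
    sub_mem (smul_mem _ r (single_mem_supported R 1 (Set.mem_Iic.mpr le_rfl)))
      (smul_mem _ s (single_mem_supported R 1 (Nat.sub_le n 1)))
  rw [LinearMap.add_apply]
  rcases Nat.mod_two_eq_zero_or_one n with h | h
  · rcases eq_or_ne n 0 with rfl | h0
    · simpa [oddBlockCompanion_single_zero, evenBlockCompanion_single_of_even] using hlow a 0
    · rw [oddBlockCompanion_single_of_even h h0, evenBlockCompanion_single_of_even h,
        add_sub_cancel_right]
      exact hlow _ _
  · rw [oddBlockCompanion_single_of_odd h, evenBlockCompanion_single_of_odd h,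
      add_sub_cancel_left]
    exact hlow _ _

theorem isPolySum_mulLeft_X (c d : R) :
    IsPolySum ((X - C a) * (X - C b)) ((X - C c) * (X - C d))
      (LinearMap.mulLeft R (X : R[X])) := by
  have hT (n : ℕ) : (oddBlockCompanion a b + evenBlockCompanion c d) (Finsupp.basisSingleOne n) -
      Finsupp.basisSingleOne (n + 1) ∈ span R (Finsupp.basisSingleOne '' Set.Iic n) := by
    rw [coe_basisSingleOne, ← supported_eq_span_single]
    exact oddBlockCompanion_add_evenBlockCompanion_single_sub_mem a b n c d
  obtain ⟨e, he⟩ := exists_conjAlgEquiv_mulLeft_X_eq hT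
  have hsum : IsPolySum ((X - C a) * (X - C b)) ((X - C c) * (X - C d))
      (oddBlockCompanion a b + evenBlockCompanion c d) :=
    ⟨_, _, rfl,
      aeval_X_sub_C_mul_X_sub_C_eq_zero_of_basis Finsupp.basisSingleOne
        (by simpa using oddBlockCompanion_sq a b),
      aeval_X_sub_C_mul_X_sub_C_eq_zero_of_basis Finsupp.basisSingleOne
        (by simpa using evenBlockCompanion_sq c d)⟩
  rw [← he] at hsum
  simpa using hsum.map (e.conjAlgEquiv R).symm

end Model

theorem IsElementary.exists_algHom_apply_mulLeft_X {F V : Type*} [Field F] [AddCommGroup V]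
    [Module F V] {u : Module.End F V} (hu : IsElementary u) :
    ∃ φ : Module.End F F[X] →ₐ[F] Module.End F V, φ (LinearMap.mulLeft F X) = u := by
  have : Module.Free F[X] (Module.AEval' u) := hu
  let bas := Module.Free.chooseBasis F[X] (Module.AEval' u)
  let E : V ≃ₗ[F] (Module.Free.ChooseBasisIndex F[X] (Module.AEval' u) →₀ F[X]) :=
    (Module.AEval'.of u).trans (bas.repr.restrictScalars F)
  have hE : ∀ v, E (u v) = (X : F[X]) • E v := fun v => by
    change bas.repr (Module.AEval'.of u (u v)) = (X : F[X]) • bas.repr (Module.AEval'.of u v)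
    rw [← Module.AEval'.X_smul_of, map_smul]
  refine ⟨(E.symm.conjAlgEquiv F).toAlgHom.comp (Finsupp.mapRange.endAlgHom _), ?_⟩
  ext v
  apply E.injective
  ext i
  simp [LinearEquiv.conjAlgEquiv_apply, hE]

/-- Every elementary endomorphism is a `(p₁, p₂)`-sum, for any split polynomials
`p₁, p₂` of degree 2. -/
theorem elementary_sum_two_quadratic (F : Type*) [Field F] (V : Type*) [AddCommGroup V]
    [Module F V] (p₁ p₂ : Polynomial F)
    (h₁ : (p₁.map (RingHom.id F)).Splits) (h₁d : p₁.degree = 2)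
    (h₂ : (p₂.map (RingHom.id F)).Splits) (h₂d : p₂.degree = 2)
    (u : Module.End F V) (hu : IsElementary u) :
    ∃ u₁ u₂ : Module.End F V,
      u = u₁ + u₂ ∧ Polynomial.aeval u₁ p₁ = 0 ∧ Polynomial.aeval u₂ p₂ = 0 := by
  obtain ⟨a, b, hab⟩ := exists_X_sub_C_mul_X_sub_C_dvd (by simpa using h₁) h₁d
  obtain ⟨c, d, hcd⟩ := exists_X_sub_C_mul_X_sub_C_dvd (by simpa using h₂) h₂d
  obtain ⟨φ, rfl⟩ := hu.exists_algHom_apply_mulLeft_X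
  exact ((isPolySum_mulLeft_X a b c d).map φ).of_dvd hab hcd
end

section
/- Let p1, p2, p3, p4 be split polynomials of degree 2 over a field F and let V be an infinite-dimensional F-vector space. Every endomorphism u of V can be written as u = u1 + u2 + u3 + u4 with pk(uk) = 0 for k = 1, 2, 3, 4. -/
/-!
Since `V` is infinite-dimensional, `V ≃ (ℕ →₀ V)²`, so `End V` is the algebra of `2 × 2` matrices
over `End (ℕ →₀ V)`. There the backward shift `w` has a surjective inner derivation
`z ↦ w z - z w`, and this lets one choose the off-diagonal entries of `!![A, x; y, B]` so that it
becomes conjugate to a matrix with any prescribed diagonal `δ₃, δ₄`. Peeling off two triangular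
matrices with scalar diagonals `δ₁, δ₂` first, every matrix is a sum of four `vₖ` with
`vₖ² = dₖ vₖ`; and a split quadratic with roots `r, s` vanishes on `v + r` whenever
`v² = (s - r) v`.
-/

open Polynomial

theorem Polynomial.Splits.exists_aeval_add_algebraMap_eq_zero_of_natDegree_eq_two {F : Type*}
    [Field F] (A : Type*) [Ring A] [Algebra F A] {p : F[X]} (hs : p.Splits)
    (hd : p.natDegree = 2) :
    ∃ r d : F, ∀ a : A, a * a = d • a → aeval (a + algebraMap F A r) p = 0 := by
  obtain ⟨r, s, hrs⟩ := Multiset.card_eq_two.mp (hd ▸ splits_iff_card_roots.mp hs)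
  have hp : p = C p.leadingCoeff * ((X - C r) * (X - C s)) := by
    simpa [hrs] using hs.eq_prod_roots
  refine ⟨r, s - r, fun a ha => ?_⟩
  have hsub : a + algebraMap F A r - algebraMap F A s = a - (s - r) • 1 := by
    rw [sub_smul, Algebra.algebraMap_eq_smul_one, Algebra.algebraMap_eq_smul_one]; abel
  rw [hp, map_mul, map_mul, map_sub, map_sub, aeval_X, aeval_C, aeval_C, aeval_C,
    add_sub_cancel_right, hsub, mul_sub, ha, mul_smul_comm, mul_one, sub_self, mul_zero]

namespace Finsupp

variable {R N : Type*} [Ring R] [AddCommGroup N] [Module R N]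

theorem surjective_commutator_lcomapDomain_succ :
    Function.Surjective fun z : Module.End R (ℕ →₀ N) =>
      lcomapDomain Nat.succ Nat.succ_injective * z -
        z * lcomapDomain Nat.succ Nat.succ_injective := by
  intro r
  -- `z (single (n + 1) v)` must be a preimage of `z (single n v) + r (single (n + 1) v)` under
  -- the backward shift `lcomapDomain Nat.succ`; the forward shift `lmapDomain Nat.succ` gives one.
  let z : ℕ → N →ₗ[R] (ℕ →₀ N) := fun n =>
    Nat.rec (lmapDomain N R Nat.succ ∘ₗ r ∘ₗ lsingle 0)
      (fun n zn => lmapDomain N R Nat.succ ∘ₗ (zn + r ∘ₗ lsingle (n + 1))) n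
  refine ⟨lsum ℕ z, lhom_ext fun n v => ?_⟩
  cases n <;> simp [z, comapDomain_mapDomain _ Nat.succ_injective]

end Finsupp

theorem Units.conj_mul_self_eq_smul {F A : Type*} [Monoid A] [SMul F A] [IsScalarTower F A A]
    [SMulCommClass F A A] (u : Aˣ) {v : A} {d : F} (h : v * v = d • v) :
    (u * v * ↑u⁻¹) * (u * v * ↑u⁻¹) = d • (u * v * ↑u⁻¹) := by
  simp [mul_assoc, ← mul_assoc v, h, smul_mul_assoc, mul_smul_comm]

namespace Matrix

theorem exists_eq_conj_of_surjective_commutator {R : Type*} [Ring R] {w : R}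
    (hw : Function.Surjective fun z => w * z - z * w) (A B δ₃ δ₄ : R) :
    ∃ (P : (Matrix (Fin 2) (Fin 2) R)ˣ) (x y m n : R),
      !![A, x; y, B] = (P * !![δ₃, m; n, δ₄] * P⁻¹ : Matrix (Fin 2) (Fin 2) R) := by
  -- `P = !![1, w; 0, 1] * !![1, 0; 1, 1]`. Three entries of `!![A, x; y, B] * P = P * X` fix
  -- `x`, `m`, `n`; the fourth one is `w * y - y * w = A + B - δ₃ - δ₄`.
  let P : (Matrix (Fin 2) (Fin 2) R)ˣ :=
    ⟨!![1 + w, w; 1, 1], !![1, -w; -1, 1 + w],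
      by simp [one_fin_two, mul_add, add_mul], by simp [one_fin_two]⟩
  obtain ⟨y, hy⟩ := hw (A + B - δ₃ - δ₄)
  refine ⟨P, (1 + w) * δ₃ + w * (y * (1 + w) + B - δ₃) - A * (1 + w), y,
    y * w + B - δ₄, y * (1 + w) + B - δ₃, ?_⟩
  obtain rfl : A = w * y - y * w - B + δ₃ + δ₄ := by
    rw [show w * y - y * w = _ from hy]; abel
  rw [Units.eq_mul_inv_iff_mul_eq]
  simp only [P, mul_fin_two]
  congr 3 <;> noncomm_ring

variable {F R : Type*} [CommRing F] [Ring R] [Algebra F R]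

theorem mul_self_eq_smul_fin_two_of_right_col_zero (d : F) (n : R) :
    !![algebraMap F R d, 0; n, 0] * !![algebraMap F R d, 0; n, 0] =
      d • !![algebraMap F R d, 0; n, 0] := by
  ext i j; fin_cases i <;> fin_cases j <;> simp [Algebra.smul_def, Algebra.commutes]

theorem mul_self_eq_smul_fin_two_of_left_col_zero (d : F) (m : R) :
    !![0, m; 0, algebraMap F R d] * !![0, m; 0, algebraMap F R d] =
      d • !![0, m; 0, algebraMap F R d] := by
  ext i j; fin_cases i <;> fin_cases j <;> simp [Algebra.smul_def, Algebra.commutes]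

theorem exists_eq_add_four_mul_self_eq_smul {w : R}
    (hw : Function.Surjective fun z => w * z - z * w) (d₁ d₂ d₃ d₄ : F)
    (T : Matrix (Fin 2) (Fin 2) R) :
    ∃ v₁ v₂ v₃ v₄ : Matrix (Fin 2) (Fin 2) R, T = v₁ + v₂ + v₃ + v₄ ∧
      v₁ * v₁ = d₁ • v₁ ∧ v₂ * v₂ = d₂ • v₂ ∧ v₃ * v₃ = d₃ • v₃ ∧ v₄ * v₄ = d₄ • v₄ := by
  obtain ⟨P, x, y, m, n, hP⟩ := exists_eq_conj_of_surjective_commutator hw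
    (T 0 0 - algebraMap F R d₁) (T 1 1 - algebraMap F R d₂) (algebraMap F R d₃)
    (algebraMap F R d₄)
  refine ⟨!![algebraMap F R d₁, 0; T 1 0 - y, 0], !![0, T 0 1 - x; 0, algebraMap F R d₂],
    (P * !![algebraMap F R d₃, 0; n, 0] * P⁻¹ : Matrix (Fin 2) (Fin 2) R),
    (P * !![0, m; 0, algebraMap F R d₄] * P⁻¹ : Matrix (Fin 2) (Fin 2) R), ?_,
    mul_self_eq_smul_fin_two_of_right_col_zero _ _, mul_self_eq_smul_fin_two_of_left_col_zero _ _,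
    Units.conj_mul_self_eq_smul P (mul_self_eq_smul_fin_two_of_right_col_zero _ _),
    Units.conj_mul_self_eq_smul P (mul_self_eq_smul_fin_two_of_left_col_zero _ _)⟩
  have hsplit : !![algebraMap F R d₃, m; n, algebraMap F R d₄] =
      !![algebraMap F R d₃, 0; n, 0] + !![0, m; 0, algebraMap F R d₄] := by
    ext i j; fin_cases i <;> fin_cases j <;> simp
  rw [add_assoc _ (_ * _ * _), ← add_mul, ← mul_add, ← hsplit, ← hP]
  ext i j; fin_cases i <;> fin_cases j <;> simp

end Matrix

theorem Module.nonempty_linearEquiv_fin_two_arrow_finsupp_of_not_finite {F : Type*} [Field F]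
    {V : Type*} [AddCommGroup V] [Module F V] (hV : ¬ Module.Finite F V) :
    Nonempty (V ≃ₗ[F] (Fin 2 → (ℕ →₀ V))) := by
  have h : Cardinal.aleph0 ≤ Module.rank F V := not_lt.mp (mt Module.rank_lt_aleph0_iff.mp hV)
  refine nonempty_linearEquiv_of_rank_eq ?_
  rw [rank_fun_eq_lift_mul, Cardinal.lift_id'.{0}, rank_finsupp, Cardinal.mk_nat,
    Cardinal.lift_aleph0, Cardinal.lift_id'.{0}, Cardinal.aleph0_mul_eq h, Fintype.card_fin,
    Cardinal.mul_eq_right h ((Cardinal.natCast_lt_aleph0 (n := 2)).le.trans h) (by norm_num)]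

/-- Every endomorphism of an infinite-dimensional vector space is a
`(p₁, p₂, p₃, p₄)`-sum, for any split polynomials `p₁, p₂, p₃, p₄` of degree 2. -/
theorem sum_four_quadratic (F : Type*) [Field F] (V : Type*) [AddCommGroup V]
    [Module F V] (hV : ¬ Module.Finite F V) (p₁ p₂ p₃ p₄ : Polynomial F)
    (h₁ : (p₁.map (RingHom.id F)).Splits) (h₁d : p₁.degree = 2)
    (h₂ : (p₂.map (RingHom.id F)).Splits) (h₂d : p₂.degree = 2)
    (h₃ : (p₃.map (RingHom.id F)).Splits) (h₃d : p₃.degree = 2)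
    (h₄ : (p₄.map (RingHom.id F)).Splits) (h₄d : p₄.degree = 2)
    (u : Module.End F V) :
    ∃ u₁ u₂ u₃ u₄ : Module.End F V,
      u = u₁ + u₂ + u₃ + u₄ ∧ Polynomial.aeval u₁ p₁ = 0 ∧
        Polynomial.aeval u₂ p₂ = 0 ∧ Polynomial.aeval u₃ p₃ = 0 ∧
        Polynomial.aeval u₄ p₄ = 0 := by
  let A := Matrix (Fin 2) (Fin 2) (Module.End F (ℕ →₀ V))
  rw [Polynomial.map_id] at h₁ h₂ h₃ h₄
  obtain ⟨r₁, d₁, hp₁⟩ := h₁.exists_aeval_add_algebraMap_eq_zero_of_natDegree_eq_two A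
    (natDegree_eq_of_degree_eq_some h₁d)
  obtain ⟨r₂, d₂, hp₂⟩ := h₂.exists_aeval_add_algebraMap_eq_zero_of_natDegree_eq_two A
    (natDegree_eq_of_degree_eq_some h₂d)
  obtain ⟨r₃, d₃, hp₃⟩ := h₃.exists_aeval_add_algebraMap_eq_zero_of_natDegree_eq_two A
    (natDegree_eq_of_degree_eq_some h₃d)
  obtain ⟨r₄, d₄, hp₄⟩ := h₄.exists_aeval_add_algebraMap_eq_zero_of_natDegree_eq_two A
    (natDegree_eq_of_degree_eq_some h₄d)
  obtain ⟨e⟩ := Module.nonempty_linearEquiv_fin_two_arrow_finsupp_of_not_finite hV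
  let φ : Module.End F V ≃ₐ[F] A :=
    (e.conjAlgEquiv F).trans (endVecAlgEquivMatrixEnd (Fin 2) F F (ℕ →₀ V))
  have aeval_symm : ∀ {a : A} {p : F[X]}, aeval a p = 0 → aeval (φ.symm a) p = 0 := fun h => by
    rw [aeval_algHom_apply, h, map_zero]
  obtain ⟨v₁, v₂, v₃, v₄, hv, hv₁, hv₂, hv₃, hv₄⟩ :=
    Matrix.exists_eq_add_four_mul_self_eq_smul Finsupp.surjective_commutator_lcomapDomain_succ
      d₁ d₂ d₃ d₄ (φ u - algebraMap F A (r₁ + r₂ + r₃ + r₄))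
  refine ⟨φ.symm (v₁ + algebraMap F A r₁), φ.symm (v₂ + algebraMap F A r₂),
    φ.symm (v₃ + algebraMap F A r₃), φ.symm (v₄ + algebraMap F A r₄), ?_,
    aeval_symm (hp₁ v₁ hv₁), aeval_symm (hp₂ v₂ hv₂), aeval_symm (hp₃ v₃ hv₃),
    aeval_symm (hp₄ v₄ hv₄)⟩
  rw [sub_eq_iff_eq_add] at hv
  rw [← φ.symm_apply_apply u, hv]
  simp only [map_add]
  abel
end

section
/- If a finite-rank endomorphism u of a vector space V over a field is the sum of three square-zero endomorphisms of V, then the trace of u is zero. -/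
/-!
Write `u = a + b + c`. Since `b² = c² = 0` we have `bc + cb = (b + c)² = (u - a)²`, and since
`a² = 0` its range lies in the finite-dimensional space `X = im u + a (im u)`. The identities
`b (cb) = (bc + cb) b` and `c (bc) = (bc + cb) c` then make `S = X + bX + cX + bcX + cbX` a
finite-dimensional subspace stable under `b` and `c`. It contains `im u`, so it is stable under
`u` and hence under `a = u - b - c`. On `S`, `u` is a sum of three nilpotent endomorphisms, so its
trace vanishes; and the trace of a finite-rank endomorphism does not depend on the
finite-dimensional subspace containing its range on which it is computed.
-/

open LinearMap Submodule

section SquareZero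

variable {R M : Type*} [Semiring R] [AddCommMonoid M] [Module R M] {b c : Module.End R M}
  {X : Submodule R M}

lemma map_le_of_mul_self_eq_zero_of_range_le (hb : b * b = 0) (hX : range (b * c + c * b) ≤ X) :
    (X ⊔ X.map b ⊔ X.map c ⊔ X.map (b * c) ⊔ X.map (c * b)).map b ≤
      X ⊔ X.map b ⊔ X.map c ⊔ X.map (b * c) ⊔ X.map (c * b) := by
  have map_mul (f g : Module.End R M) : (X.map g).map f = X.map (f * g) := by
    rw [Module.End.mul_eq_comp, map_comp]
  have hbcb : b * c * b = (b * c + c * b) * b := by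
    rw [add_mul, mul_assoc c, hb, mul_zero, add_zero]
  simp only [Submodule.map_sup, map_mul, hb, ← mul_assoc, zero_mul, Submodule.map_zero,
    bot_le, and_true, sup_le_iff, hbcb]
  refine ⟨⟨le_sup_of_le_left (le_sup_of_le_left (le_sup_of_le_left le_sup_right)),
    le_sup_of_le_left le_sup_right⟩, ?_⟩
  calc map ((b * c + c * b) * b) X ≤ range ((b * c + c * b) * b) := map_le_range
    _ ≤ range (b * c + c * b) := by rw [Module.End.mul_eq_comp]; exact range_comp_le_range _ _
    _ ≤ X := hX
    _ ≤ _ := le_sup_of_le_left (le_sup_of_le_left (le_sup_of_le_left le_sup_left))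

lemma exists_fg_stable_of_mul_self_eq_zero (hb : b * b = 0) (hc : c * c = 0)
    (hXfg : X.FG) (hX : range (b * c + c * b) ≤ X) :
    ∃ S : Submodule R M, X ≤ S ∧ S.FG ∧ (∀ v ∈ S, b v ∈ S) ∧ ∀ v ∈ S, c v ∈ S := by
  have hS : X ⊔ X.map c ⊔ X.map b ⊔ X.map (c * b) ⊔ X.map (b * c) =
      X ⊔ X.map b ⊔ X.map c ⊔ X.map (b * c) ⊔ X.map (c * b) := by
    ac_rfl
  have hbS := map_le_of_mul_self_eq_zero_of_range_le hb hX
  have hcS := map_le_of_mul_self_eq_zero_of_range_le (c := b) (X := X) hc (by rwa [add_comm])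
  rw [hS] at hcS
  refine ⟨_, le_sup_left.trans (le_sup_left.trans (le_sup_left.trans le_sup_left)),
    (((hXfg.sup (hXfg.map b)).sup (hXfg.map c)).sup (hXfg.map _)).sup (hXfg.map _),
    fun v hv ↦ hbS (mem_map_of_mem hv), fun v hv ↦ hcS (mem_map_of_mem hv)⟩

end SquareZero

lemma range_sub_mul_sub_le_of_mul_self_eq_zero {R M : Type*} [Ring R] [AddCommGroup M]
    [Module R M] {f a : Module.End R M} (ha : a * a = 0) :
    range ((f - a) * (f - a)) ≤ range f ⊔ (range f).map a := by
  rintro _ ⟨x, rfl⟩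
  have hax : a (a x) = 0 := by rw [← Module.End.mul_apply, ha, LinearMap.zero_apply]
  have : ((f - a) * (f - a)) x = f ((f - a) x) - a (f x) := by
    simp only [Module.End.mul_apply, LinearMap.sub_apply, map_sub, hax, sub_zero]
    exact sub_right_comm _ _ _
  rw [this]
  exact sub_mem (mem_sup_left (mem_range_self f _))
    (mem_sup_right (mem_map_of_mem (mem_range_self f x)))

section Trace

variable {K V : Type*} [Field K] [AddCommGroup V] [Module K V] {f : Module.End K V}

lemma trace_restrict_eq_zero_of_isNilpotent (hf : IsNilpotent f) {S : Submodule K V}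
    [FiniteDimensional K S] (hS : ∀ v ∈ S, f v ∈ S) : trace K S (f.restrict hS) = 0 :=
  (isNilpotent_trace_of_isNilpotent (Module.End.isNilpotent.restrict hS hf)).eq_zero

lemma trace_restrict_eq_of_le {W T : Submodule K V} [FiniteDimensional K T] (hWT : W ≤ T)
    (hf : range f ≤ W) (hW : ∀ v ∈ W, f v ∈ W) (hT : ∀ v ∈ T, f v ∈ T) :
    trace K W (f.restrict hW) = trace K T (f.restrict hT) := by
  set W' : Submodule K T := W.comap T.subtype
  have hfW' : ∀ v : T, f.restrict hT v ∈ W' := fun v ↦ hf (mem_range_self f v)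
  rw [← trace_restrict_eq_of_forall_mem W' (f.restrict hT) hfW']
  have hconj : (comapSubtypeEquivOfLe hWT).conj ((f.restrict hT).restrict fun v _ ↦ hfW' v) =
      f.restrict hW := by
    ext v
    rfl
  rw [← hconj, trace_conj']

lemma trace_restrict_eq_of_range_le {W S : Submodule K V} [FiniteDimensional K W]
    [FiniteDimensional K S] (hfW : range f ≤ W) (hfS : range f ≤ S) (hW : ∀ v ∈ W, f v ∈ W)
    (hS : ∀ v ∈ S, f v ∈ S) : trace K W (f.restrict hW) = trace K S (f.restrict hS) := by
  have hT : ∀ v ∈ W ⊔ S, f v ∈ W ⊔ S := fun v _ ↦ mem_sup_left (hfW (mem_range_self f v))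
  rw [trace_restrict_eq_of_le le_sup_left hfW hW hT,
    trace_restrict_eq_of_le le_sup_right hfS hS hT]

end Trace

/-- If a finite-rank endomorphism `u` of a vector space `V` is the sum of three
square-zero endomorphisms, then the trace of `u` is zero.  The trace of `u` is
computed as the trace of the endomorphism induced by `u` on any
finite-dimensional subspace `W` containing the image of `u`. -/
theorem trace_eq_zero_of_sum_three_square_zero (F : Type*) [Field F] (V : Type*)
    [AddCommGroup V] [Module F V] (u : Module.End F V)
    (W : Submodule F V) (hW : FiniteDimensional F W) (hle : LinearMap.range u ≤ W)
    (hstab : ∀ x ∈ W, u x ∈ W)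
    (a b c : Module.End F V) (ha : a * a = 0) (hb : b * b = 0) (hc : c * c = 0)
    (hu : u = a + b + c) :
    LinearMap.trace F W (u.restrict hstab) = 0 := by
  have hbc : b * c + c * b = (u - a) * (u - a) := by
    rw [hu, add_assoc, add_sub_cancel_left, add_mul, mul_add, mul_add, hb, hc, zero_add, add_zero]
  have hXfg : (range u ⊔ (range u).map a).FG :=
    have hfg := (fg_iff_finiteDimensional _).2 (finiteDimensional_of_le hle)
    hfg.sup (hfg.map a)
  obtain ⟨S, hXS, hSfg, hbS, hcS⟩ := exists_fg_stable_of_mul_self_eq_zero hb hc hXfg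
    (hbc ▸ range_sub_mul_sub_le_of_mul_self_eq_zero ha)
  have : FiniteDimensional F S := (fg_iff_finiteDimensional S).1 hSfg
  have huS : range u ≤ S := le_sup_left.trans hXS
  have huS' : ∀ v ∈ S, u v ∈ S := fun v _ ↦ huS (mem_range_self u v)
  have haS : ∀ v ∈ S, a v ∈ S := fun v hv ↦ by
    have : a v = u v - c v - b v := by
      rw [hu, LinearMap.add_apply, LinearMap.add_apply, add_sub_cancel_right, add_sub_cancel_right]
    exact this ▸ sub_mem (sub_mem (huS' v hv) (hcS v hv)) (hbS v hv)
  have hsum : u.restrict huS' = a.restrict haS + b.restrict hbS + c.restrict hcS := by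
    ext v
    simp [hu]
  have hnil {x : Module.End F V} (hx : x * x = 0) : IsNilpotent x := ⟨2, by rw [sq, hx]⟩
  rw [trace_restrict_eq_of_range_le hle huS hstab huS', hsum, map_add, map_add,
    trace_restrict_eq_zero_of_isNilpotent (hnil ha),
    trace_restrict_eq_zero_of_isNilpotent (hnil hb),
    trace_restrict_eq_zero_of_isNilpotent (hnil hc), add_zero, add_zero]
end

section
/- Let F be a field and α ∈ F with α ∉ {0, 1, 2, 3} and 2α ≠ 3, and let V be a nonzero F-vector space. Then α·id_V is not the sum of three idempotent endomorphisms of V. -/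
/-!
Write `r = α - p - q`. Expanding `r² = r` gives `pq + qp = (α - α²) + (2α - 2)(p + q)`;
multiplying this by `p` on the left and on the right and subtracting yields
`(2α - 3)(pq - qp) = 0`, so `p` and `q` commute. Commuting idempotents have a common
eigenvector `v ≠ 0`, which is then also an eigenvector of `r`. Eigenvalues of idempotents are
`0` or `1`, so `α`, the sum of the three eigenvalues at `v`, lies in `{0, 1, 2, 3}`.
-/

theorem IsIdempotentElem.smul_commutator_eq_zero_of_add_add_eq_smul_one {R A : Type*}
    [CommRing R] [Ring A] [Algebra R A] {p q r : A} {c : R} (hp : IsIdempotentElem p)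
    (hq : IsIdempotentElem q) (hr : IsIdempotentElem r) (h : p + q + r = c • 1) :
    (2 * c - 3) • (p * q - q * p) = 0 := by
  obtain rfl : r = c • 1 - p - q := by rw [← h]; abel
  have hsq : p * q + q * p = (c - c ^ 2) • 1 + (2 * c - 2) • p + (2 * c - 2) • q := by
    have := hr.eq
    simp only [sub_mul, mul_sub, smul_mul_assoc, mul_smul_comm, one_mul, mul_one, hp.eq, hq.eq]
      at this
    linear_combination (norm := module) this
  have hleft := congr(p * $hsq)
  have hright := congr($hsq * p)
  simp only [mul_add, add_mul, mul_smul_comm, smul_mul_assoc, mul_one, one_mul, mul_assoc,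
    ← mul_assoc p p, hp.eq] at hleft hright
  linear_combination (norm := module) hright - hleft

theorem IsIdempotentElem.commute_of_add_add_eq_smul_one {R A : Type*}
    [CommRing R] [Ring A] [Algebra R A] {p q r : A} {c : R} (hp : IsIdempotentElem p)
    (hq : IsIdempotentElem q) (hr : IsIdempotentElem r) (h : p + q + r = c • 1)
    (hc : IsUnit (2 * c - 3)) : Commute p q := by
  have := hp.smul_commutator_eq_zero_of_add_add_eq_smul_one hq hr h
  rwa [hc.smul_eq_zero, sub_eq_zero] at this

section Eigenvectors
variable {R M : Type*} [CommRing R] [AddCommGroup M] [Module R M]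

open Module End

theorem IsIdempotentElem.isIdempotentElem_of_apply_eq_smul [IsDomain R]
    [Module.IsTorsionFree R M] {p : End R M} (hp : IsIdempotentElem p) {v : M} {μ : R}
    (hv : v ≠ 0) (hpv : p v = μ • v) :
    IsIdempotentElem μ := by
  refine smul_left_injective R hv ?_
  have := congr($hp.eq v)
  simp only [mul_apply, hpv, map_smul, smul_smul] at this
  exact this

theorem IsIdempotentElem.exists_eigenvector_mem {p : End R M} (hp : IsIdempotentElem p)
    {W : Submodule R M} (hW : Set.MapsTo p W W) {v : M} (hvW : v ∈ W) (hv : v ≠ 0) :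
    ∃ w ∈ W, w ≠ 0 ∧ ∃ μ : R, p w = μ • w := by
  by_cases hpv : p v = 0
  · exact ⟨v, hvW, hv, 0, by rw [hpv, zero_smul]⟩
  · exact ⟨p v, hW hvW, hpv, 1, by rw [one_smul, ← mul_apply, hp.eq]⟩

theorem IsIdempotentElem.exists_common_eigenvector [Nontrivial M] {p q : End R M}
    (hp : IsIdempotentElem p) (hq : IsIdempotentElem q) (hpq : Commute p q) :
    ∃ v ≠ 0, ∃ μ ν : R, p v = μ • v ∧ q v = ν • v := by
  obtain ⟨v, hv⟩ := exists_ne (0 : M)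
  obtain ⟨w, -, hw, ν, hqw⟩ := hq.exists_eigenvector_mem (Set.mapsTo_univ _ _)
    (Submodule.mem_top (x := v)) hv
  obtain ⟨u, huW, hu, μ, hpu⟩ := hp.exists_eigenvector_mem
    (mapsTo_genEigenspace_of_comm hpq.symm ν 1) (mem_eigenspace_iff.mpr hqw) hw
  exact ⟨u, hu, μ, ν, hpu, mem_eigenspace_iff.mp huW⟩

end Eigenvectors

/-- If `α ∉ {0, 1, 2, 3}` and `2α ≠ 3`, then `α • id` is not the sum of three
idempotent endomorphisms of a nonzero vector space. -/
theorem smul_id_not_sum_three_idempotents (F : Type*) [Field F] (V : Type*)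
    [AddCommGroup V] [Module F V] [Nontrivial V] (α : F)
    (h0 : α ≠ 0) (h1 : α ≠ 1) (h2 : α ≠ 2) (h3 : α ≠ 3) (h23 : 2 * α ≠ 3) :
    ¬ ∃ p q r : Module.End F V,
        p * p = p ∧ q * q = q ∧ r * r = r ∧ α • (1 : Module.End F V) = p + q + r := by
  rintro ⟨p, q, r, hp, hq, hr, hsum⟩
  have hpq : Commute p q := IsIdempotentElem.commute_of_add_add_eq_smul_one hp hq hr hsum.symm
    (sub_ne_zero.mpr h23).isUnit
  obtain ⟨v, hv, μ, ν, hpv, hqv⟩ := IsIdempotentElem.exists_common_eigenvector hp hq hpq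
  have hrv : r v = (α - μ - ν) • v := by
    rw [eq_sub_of_add_eq' hsum.symm]
    simp only [LinearMap.sub_apply, LinearMap.add_apply, LinearMap.smul_apply, Module.End.one_apply,
      hpv, hqv]
    module
  have hμ := IsIdempotentElem.iff_eq_zero_or_one.mp <|
    IsIdempotentElem.isIdempotentElem_of_apply_eq_smul hp hv hpv
  have hν := IsIdempotentElem.iff_eq_zero_or_one.mp <|
    IsIdempotentElem.isIdempotentElem_of_apply_eq_smul hq hv hqv
  have hρ := IsIdempotentElem.iff_eq_zero_or_one.mp <|
    IsIdempotentElem.isIdempotentElem_of_apply_eq_smul hr hv hrv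
  grind
end

section
/- If p, q, r are idempotent endomorphisms of a vector space V with p + q + r = α·id_V, where α ∈ F satisfies 2α ≠ 3, then p, q, and r pairwise commute. -/
theorem IsIdempotentElem.smul_commutator_eq_zero_of_add_add_eq_smul_one_s6 {R A : Type*}
    [CommRing R] [Ring A] [Algebra R A] {a b c : A} (ha : IsIdempotentElem a)
    (hb : IsIdempotentElem b) (hc : IsIdempotentElem c) {α : R}
    (hsum : a + b + c = α • (1 : A)) : (3 - 2 * α) • (a * b - b * a) = 0 := by
  have hc' : c = α • 1 - a - b := by rw [← hsum]; abel
  have haa : a * a = a := ha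
  have hbb : b * b = b := hb
  have hab : a * (a * b) = a * b := by rw [← mul_assoc, haa]
  calc (3 - 2 * α) • (a * b - b * a) = a * (c * c - c) - (c * c - c) * a := by
        rw [hc']
        simp only [mul_sub, sub_mul, smul_mul_assoc, mul_smul_comm, mul_one, one_mul,
          mul_assoc, haa, hbb, hab]
        module
    _ = 0 := by rw [hc.eq, sub_self, mul_zero, zero_mul, sub_zero]

theorem commute_of_isIdempotentElem_of_add_add_eq_smul_one {F A : Type*}
    [Field F] [Ring A] [Algebra F A] {a b c : A} (ha : IsIdempotentElem a)
    (hb : IsIdempotentElem b) (hc : IsIdempotentElem c) {α : F} (hα : 2 * α ≠ 3)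
    (hsum : a + b + c = α • (1 : A)) : Commute a b := by
  have h32 : (3 : F) - 2 * α ≠ 0 := sub_ne_zero.2 hα.symm
  exact sub_eq_zero.1 <| (smul_eq_zero.1 <|
    ha.smul_commutator_eq_zero_of_add_add_eq_smul_one_s6 hb hc hsum).resolve_left h32

/-- If idempotent endomorphisms `p, q, r` of a vector space satisfy
`p + q + r = α • id` with `2α ≠ 3`, then `p, q, r` pairwise commute. -/
theorem commute_of_sum_three_idempotents_eq_smul_id (F : Type*) [Field F] (V : Type*)
    [AddCommGroup V] [Module F V] (α : F) (h23 : 2 * α ≠ 3)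
    (p q r : Module.End F V) (hp : p * p = p) (hq : q * q = q) (hr : r * r = r)
    (hsum : p + q + r = α • (1 : Module.End F V)) :
    Commute p q ∧ Commute p r ∧ Commute q r := by
  refine ⟨commute_of_isIdempotentElem_of_add_add_eq_smul_one hp hq hr h23 hsum,
    commute_of_isIdempotentElem_of_add_add_eq_smul_one hp hr hq h23 ?_,
    commute_of_isIdempotentElem_of_add_add_eq_smul_one hq hr hp h23 ?_⟩ <;>
  rw [← hsum] <;> abel
end

section
/- Let V be a vector space over a field with countable basis (e_n)_{n∈ℕ}, and let u be an endomorphism of V such that for every n, u(e_n) ≡ e_{n+1} modulo the span of e_0, …, e_n. Then (u^n(e_0))_{n∈ℕ} is a basis of V. -/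
/-!
Write `v n = uⁿ (e₀)`. Inductively `v n ≡ e n` modulo the span of `e₀, …, e_{n-1}`, i.e. `v`
is unitriangular with respect to `e`. Hence `e n` lies in the span of `v₀, …, vₙ`, so `v` spans;
and `v n` is not in the span of `v₀, …, v_{n-1}` (which lies in that of `e₀, …, e_{n-1}`), so
`v` is linearly independent.
-/

open Set Submodule

section Unitriangular

variable {R V : Type*} [Ring R] [AddCommGroup V] [Module R V] {e v : ℕ → V}

theorem mem_span_image_Iio_add_one_of_sub_mem (h : ∀ n, v n - e n ∈ span R (e '' Iio n))
    (n : ℕ) : v n ∈ span R (e '' Iio (n + 1)) := by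
  rw [← sub_add_cancel (v n) (e n)]
  exact add_mem (span_mono (image_mono (Iio_subset_Iio n.le_succ)) (h n))
    (subset_span ⟨n, n.lt_succ_self, rfl⟩)

theorem span_image_Iio_le_of_sub_mem (h : ∀ n, v n - e n ∈ span R (e '' Iio n)) (n : ℕ) :
    span R (v '' Iio n) ≤ span R (e '' Iio n) :=
  span_le.2 <| by
    rintro _ ⟨k, hk, rfl⟩
    exact span_mono (image_mono (Iio_subset_Iio hk)) (mem_span_image_Iio_add_one_of_sub_mem h k)

theorem Module.Basis.top_le_span_range_of_sub_mem (e : Module.Basis ℕ R V)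
    (h : ∀ n, v n - e n ∈ span R (e '' Iio n)) : ⊤ ≤ span R (range v) := by
  have he : ∀ n, e n ∈ span R (range v) := by
    intro n
    induction n using Nat.strong_induction_on with
    | _ n ih =>
      rw [← sub_sub_cancel (v n) (e n)]
      refine sub_mem (subset_span ⟨n, rfl⟩) (span_le.2 ?_ (h n))
      rintro _ ⟨k, hk, rfl⟩
      exact ih k hk
  rw [← e.span_eq]
  exact span_le.2 <| range_subset_iff.2 he

end Unitriangular

section LinearIndependent

variable {K V : Type*} [DivisionRing K] [AddCommGroup V] [Module K V] {v : ℕ → V}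

theorem linearIndependent_of_notMem_span_image_Iio (h : ∀ n, v n ∉ span K (v '' Iio n)) :
    LinearIndependent K v := by
  have hIio : ∀ n, LinearIndepOn K v (Iio n) := by
    intro n
    induction n with
    | zero => simp
    | succ n ih =>
      rw [Iio_add_one_eq_Iic, ← Iio_insert, linearIndepOn_insert self_notMem_Iio]
      exact ⟨ih, h n⟩
  rw [← linearIndepOn_univ_iff, ← iUnion_Iio]
  exact linearIndepOn_iUnion_of_directed monotone_Iio.directed_le hIio

theorem Module.Basis.linearIndependent_of_sub_mem (e : Module.Basis ℕ K V)
    (h : ∀ n, v n - e n ∈ span K (e '' Iio n)) : LinearIndependent K v := by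
  refine linearIndependent_of_notMem_span_image_Iio fun n hn => ?_
  have hvn : v n ∈ span K (e '' Iio n) := span_image_Iio_le_of_sub_mem h n hn
  refine e.linearIndependent.notMem_span_image (s := Iio n) self_notMem_Iio ?_
  rw [← sub_sub_cancel (v n) (e n)]
  exact sub_mem hvn (h n)

end LinearIndependent

section Iterates

variable {R V : Type*} [Ring R] [AddCommGroup V] [Module R V] {e : ℕ → V} {u : Module.End R V}

theorem map_span_image_Iio_le (hu : ∀ n, u (e n) - e (n + 1) ∈ span R (e '' Iio (n + 1)))
    (n : ℕ) : (span R (e '' Iio n)).map u ≤ span R (e '' Iio (n + 1)) := by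
  rw [map_span, span_le]
  rintro _ ⟨_, ⟨k, hk, rfl⟩, rfl⟩
  rw [← sub_add_cancel (u (e k)) (e (k + 1))]
  have hkn : k + 1 < n + 1 := Nat.succ_lt_succ hk
  exact add_mem (span_mono (image_mono (Iio_subset_Iio hkn.le)) (hu k))
    (subset_span ⟨k + 1, hkn, rfl⟩)

theorem pow_apply_sub_mem_span_image_Iio
    (hu : ∀ n, u (e n) - e (n + 1) ∈ span R (e '' Iio (n + 1))) (n : ℕ) :
    (u ^ n) (e 0) - e n ∈ span R (e '' Iio n) := by
  induction n with
  | zero => simp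
  | succ n ih =>
    have hsplit : (u ^ (n + 1)) (e 0) - e (n + 1) =
        u ((u ^ n) (e 0) - e n) + (u (e n) - e (n + 1)) := by
      rw [pow_succ', Module.End.mul_apply, map_sub]
      abel
    rw [hsplit]
    exact add_mem (map_span_image_Iio_le hu n (mem_map_of_mem ih)) (hu n)

end Iterates

/-- If `(eₙ)` is a basis of `V` and `u (eₙ) ≡ e_{n+1}` modulo the span of
`e₀, …, eₙ` for every `n`, then `(uⁿ (e₀))ₙ` is a basis of `V`. -/
theorem basis_of_iterates (F : Type*) [Field F] (V : Type*) [AddCommGroup V]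
    [Module F V] (e : Module.Basis ℕ F V) (u : Module.End F V)
    (hu : ∀ n : ℕ, u (e n) - e (n + 1) ∈
      Submodule.span F (Set.range fun i : Fin (n + 1) => e i)) :
    ∃ b : Module.Basis ℕ F V, ∀ n : ℕ, b n = (u ^ n) (e 0) := by
  have hu' : ∀ n, u (e n) - e (n + 1) ∈ span F (e '' Iio (n + 1)) := fun n => by
    rw [← Fin.range_val, ← range_comp]
    exact hu n
  have h := pow_apply_sub_mem_span_image_Iio hu'
  exact ⟨.mk (e.linearIndependent_of_sub_mem h) (e.top_le_span_range_of_sub_mem h),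
    Module.Basis.mk_apply _ _⟩
end

section
/- Let V be a vector space over a field with countable basis (e_n)_{n∈ℕ}, and let u be an endomorphism of V such that for every n, u(e_n) ≡ e_{n+1} modulo the span of e_0, …, e_n. Then V, viewed as an F[t]-module via t·x = u(x), is free of rank one (generated by e_0). -/
/-!
The iterates `uⁿ e₀` are unitriangular with respect to the basis `(eₙ)`:
`uⁿ e₀ ≡ eₙ` modulo `span (e₀, …, e_{n-1})`. Hence they span `V` (solve for `eₙ` by
induction), and for `p ≠ 0` the `e_{deg p}`-coordinate of `p(u) e₀` is the leading
coefficient of `p`, so `p ↦ p(u) e₀` is injective. Thus `p ↦ p • e₀` is an isomorphism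
`F[t] ≃ V` of `F[t]`-modules.
-/

open Polynomial Module

namespace Module.Basis

variable {R V : Type*} [CommRing R] [AddCommGroup V] [Module R V] (e : Basis ℕ R V)

def initialSpan (n : ℕ) : Submodule R V :=
  Submodule.span R (Set.range fun i : Fin n => e i)

theorem initialSpan_mono : Monotone e.initialSpan := fun _ _ hmn =>
  Submodule.span_mono <| Set.range_subset_iff.mpr fun i => ⟨⟨i, i.2.trans_le hmn⟩, rfl⟩

theorem mem_initialSpan {i n : ℕ} (h : i < n) : e i ∈ e.initialSpan n :=
  Submodule.subset_span ⟨⟨i, h⟩, rfl⟩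

theorem coord_eq_zero_of_mem_initialSpan {m n : ℕ} (hnm : n ≤ m) {x : V}
    (hx : x ∈ e.initialSpan n) : e.coord m x = 0 := by
  suffices e.initialSpan n ≤ LinearMap.ker (e.coord m) from this hx
  refine Submodule.span_le.mpr <| Set.range_subset_iff.mpr fun i => ?_
  simp [(i.2.trans_le hnm).ne]

theorem span_eq_top_of_sub_mem_initialSpan {v : ℕ → V}
    (hv : ∀ n, v n - e n ∈ e.initialSpan n) : Submodule.span R (Set.range v) = ⊤ := by
  suffices ∀ n, e n ∈ Submodule.span R (Set.range v) by
    rw [eq_top_iff, ← e.span_eq, Submodule.span_le]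
    exact Set.range_subset_iff.mpr this
  intro n
  induction n using Nat.strong_induction_on with
  | _ n ih =>
    have hlower : e.initialSpan n ≤ Submodule.span R (Set.range v) :=
      Submodule.span_le.mpr <| Set.range_subset_iff.mpr fun i => ih i i.2
    rw [← sub_sub_cancel (v n) (e n)]
    exact sub_mem (Submodule.subset_span ⟨n, rfl⟩) (hlower (hv n))

theorem coord_eq_ite_of_sub_mem_initialSpan {v : ℕ → V}
    (hv : ∀ n, v n - e n ∈ e.initialSpan n) {i n : ℕ} (hin : i ≤ n) :
    e.coord n (v i) = if i = n then 1 else 0 := by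
  rw [← sub_add_cancel (v i) (e i), map_add,
    e.coord_eq_zero_of_mem_initialSpan hin (hv i), zero_add, coord_apply, repr_self,
    Finsupp.single_apply]

section Iterates

variable {e} {u : Module.End R V} (hu : ∀ n, u (e n) - e (n + 1) ∈ e.initialSpan (n + 1))
include hu

theorem apply_mem_initialSpan_succ {n : ℕ} {x : V} (hx : x ∈ e.initialSpan n) :
    u x ∈ e.initialSpan (n + 1) := by
  induction hx using Submodule.span_induction with
  | mem y hy =>
    obtain ⟨i, rfl⟩ := hy
    rw [← sub_add_cancel (u (e i)) (e (i + 1))]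
    exact add_mem (e.initialSpan_mono (by omega) (hu i)) (e.mem_initialSpan (by omega))
  | zero => simp
  | add y z _ _ hy hz => rw [map_add]; exact add_mem hy hz
  | smul a y _ hy => rw [map_smul]; exact Submodule.smul_mem _ a hy

theorem pow_apply_zero_sub_mem_initialSpan (n : ℕ) :
    (u ^ n) (e 0) - e n ∈ e.initialSpan n := by
  induction n with
  | zero => simp
  | succ n ih =>
    have hstep : (u ^ (n + 1)) (e 0) - e (n + 1)
        = u ((u ^ n) (e 0) - e n) + (u (e n) - e (n + 1)) := by
      rw [pow_succ', Module.End.mul_apply, map_sub]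
      abel
    rw [hstep]
    exact add_mem (apply_mem_initialSpan_succ hu ih) (hu n)

theorem coord_natDegree_aeval_apply_zero (p : R[X]) :
    e.coord p.natDegree (aeval u p (e 0)) = p.leadingCoeff := by
  have hcoord {i n : ℕ} (hin : i ≤ n) :=
    e.coord_eq_ite_of_sub_mem_initialSpan (pow_apply_zero_sub_mem_initialSpan hu) hin
  rw [aeval_eq_sum_range, LinearMap.sum_apply, map_sum,
    Finset.sum_eq_single_of_mem p.natDegree (Finset.self_mem_range_succ _)]
  · simp [hcoord le_rfl]
  · intro i hi hne
    simp [hcoord (Nat.lt_succ_iff.mp (Finset.mem_range.mp hi)), hne]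

theorem aeval_apply_zero_injective : Function.Injective fun p : R[X] => aeval u p (e 0) := by
  intro p q hpq
  rw [← sub_eq_zero, ← leadingCoeff_eq_zero, ← coord_natDegree_aeval_apply_zero hu,
    map_sub, LinearMap.sub_apply, sub_eq_zero.mpr hpq, map_zero]

theorem aeval_apply_zero_surjective : Function.Surjective fun p : R[X] => aeval u p (e 0) := by
  let φ : R[X] →ₗ[R] V := LinearMap.applyₗ (e 0) ∘ₗ (aeval u).toLinearMap
  suffices LinearMap.range φ = ⊤ from LinearMap.range_eq_top.mp this
  rw [eq_top_iff, ← e.span_eq_top_of_sub_mem_initialSpan (pow_apply_zero_sub_mem_initialSpan hu),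
    Submodule.span_le]
  rintro _ ⟨n, rfl⟩
  exact ⟨X ^ n, by simp [φ]⟩

end Iterates

end Module.Basis

theorem Module.AEval'.bijective_toSpanSingleton_iff {R V : Type*} [CommSemiring R]
    [AddCommMonoid V] [Module R V] {u : Module.End R V} {v : V} :
    Function.Bijective (LinearMap.toSpanSingleton R[X] _ (AEval'.of u v)) ↔
      Function.Bijective fun p : R[X] => aeval u p v := by
  have : ⇑(LinearMap.toSpanSingleton R[X] _ (AEval'.of u v)) =
      AEval'.of u ∘ fun p => aeval u p v :=
    funext fun p => (AEval.of_aeval_smul u p v).symm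
  rw [this, Function.Bijective.of_comp_iff' (AEval'.of u).bijective]

/-- If `(eₙ)` is a basis of `V` and `u (eₙ) ≡ e_{n+1}` modulo the span of
`e₀, …, eₙ` for every `n`, then `V`, viewed as an `F[t]`-module where `t` acts
as `u`, is free of rank one, generated by `e₀`. -/
theorem free_rank_one_of_iterates (F : Type*) [Field F] (V : Type*) [AddCommGroup V]
    [Module F V] (e : Module.Basis ℕ F V) (u : Module.End F V)
    (hu : ∀ n : ℕ, u (e n) - e (n + 1) ∈
      Submodule.span F (Set.range fun i : Fin (n + 1) => e i)) :
    ∃ b : Module.Basis (Fin 1) (Polynomial F) (Module.AEval' u),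
      b 0 = Module.AEval'.of u (e 0) := by
  have hbij := Module.AEval'.bijective_toSpanSingleton_iff.mpr
    ⟨Basis.aeval_apply_zero_injective hu, Basis.aeval_apply_zero_surjective hu⟩
  exact ⟨(Basis.singleton (Fin 1) F[X]).map (LinearEquiv.ofBijective _ hbij), by simp⟩
end

section
/- Let F be a field, a, b ∈ F, and let u be an elementary endomorphism of an F-vector space V. Then there exist endomorphisms v, w of V with u = v + w, v² = a·v, and w² = b·w. -/
/-!
Let `g i` be an `F[t]`-basis of `V`. For any scalars `c n`, the monic polynomials
`p n = ∏_{k < n} (t - c k)` form an `F`-basis of `F[t]`, so the vectors `e (n, i) = p n • g i`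
form an `F`-basis of `V` on which `u` acts by `u (e (n, i)) = e (n + 1, i) + c n • e (n, i)`.
Choose `c = 0, b, a, b, a, …`. Then `u = v + w`, where `v` kills `e (0, i)` and maps
`e (2k+1, i) ↦ e (2k+2, i) ↦ a • e (2k+2, i)`, while `w` maps `e (2k, i) ↦ e (2k+1, i) ↦ b • e (2k+1, i)`.
On each of these two-dimensional blocks, `v² = a • v` and `w² = b • w` hold by inspection.
-/

open Polynomial Module

namespace Polynomial

variable {R : Type*} [CommRing R]

lemma monic_prod_range_X_sub_C (c : ℕ → R) (n : ℕ) :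
    (∏ k ∈ Finset.range n, (X - C (c k))).Monic :=
  monic_prod_of_monic _ _ fun k _ => monic_X_sub_C (c k)

variable [Nontrivial R]

noncomputable def Sequence.prodXSubC (c : ℕ → R) : Sequence R where
  elems' n := ∏ k ∈ Finset.range n, (X - C (c k))
  degree_eq' n := by
    rw [degree_eq_natDegree (monic_prod_range_X_sub_C c n).ne_zero]
    simp

namespace Sequence

lemma prodXSubC_apply (c : ℕ → R) (n : ℕ) :
    prodXSubC c n = ∏ k ∈ Finset.range n, (X - C (c k)) :=
  rfl

lemma X_mul_prodXSubC (c : ℕ → R) (n : ℕ) :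
    X * prodXSubC c n = prodXSubC c (n + 1) + c n • prodXSubC c n := by
  simp only [prodXSubC_apply, Finset.prod_range_succ, smul_eq_C_mul]
  ring

lemma isUnit_leadingCoeff_prodXSubC (c : ℕ → R) (n : ℕ) :
    IsUnit (prodXSubC c n).leadingCoeff := by
  rw [prodXSubC_apply, Monic.leadingCoeff (monic_prod_range_X_sub_C c n)]
  exact isUnit_one

end Sequence

end Polynomial

section ShiftBasis

variable {R V : Type*} [CommRing R] [IsDomain R] [AddCommGroup V] [Module R V]
  (u : Module.End R V) [Module.Free R[X] (AEval' u)]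

noncomputable def shiftBasis (c : ℕ → R) :
    Basis (ℕ × Free.ChooseBasisIndex R[X] (AEval' u)) R V :=
  (((Sequence.prodXSubC c).basis (Sequence.isUnit_leadingCoeff_prodXSubC c)).smulTower
    (Free.chooseBasis R[X] (AEval' u))).map (AEval'.of u).symm

lemma apply_shiftBasis (c : ℕ → R) (n : ℕ) (i : Free.ChooseBasisIndex R[X] (AEval' u)) :
    u (shiftBasis u c (n, i)) = shiftBasis u c (n + 1, i) + c n • shiftBasis u c (n, i) := by
  simp only [shiftBasis, Basis.map_apply, Basis.smulTower_apply, Sequence.basis_eq_self]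
  rw [← AEval'.of_symm_X_smul, ← smul_assoc, smul_eq_mul, Sequence.X_mul_prodXSubC, add_smul,
    map_add, smul_assoc, LinearEquiv.map_smul]

end ShiftBasis

def alternatingCoeff {R : Type*} [Zero R] (a b : R) (n : ℕ) : R :=
  if n = 0 then 0 else if Even n then a else b

namespace Module.Basis

variable {R V ι : Type*} [CommRing R] [AddCommGroup V] [Module R V] (e : Basis (ℕ × ι) R V)

noncomputable def oddShift (a : R) : Module.End R V :=
  e.constr R fun p => if p.1 = 0 then 0 else if Even p.1 then a • e p else e (p.1 + 1, p.2)

noncomputable def evenShift (b : R) : Module.End R V :=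
  e.constr R fun p => if Even p.1 then e (p.1 + 1, p.2) else b • e p

lemma oddShift_apply (a : R) (n : ℕ) (i : ι) :
    e.oddShift a (e (n, i)) =
      if n = 0 then 0 else if Even n then a • e (n, i) else e (n + 1, i) := by
  simp [oddShift]

lemma evenShift_apply (b : R) (n : ℕ) (i : ι) :
    e.evenShift b (e (n, i)) = if Even n then e (n + 1, i) else b • e (n, i) := by
  simp [evenShift]

lemma oddShift_mul_self (a : R) : e.oddShift a * e.oddShift a = a • e.oddShift a := by
  refine e.ext fun ⟨n, i⟩ => ?_
  rcases eq_or_ne n 0 with rfl | hn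
  · simp [oddShift_apply]
  by_cases he : Even n
  · simp [oddShift_apply, hn, he, smul_smul]
  · simp [oddShift_apply, hn, he, Nat.even_add_one]

lemma evenShift_mul_self (b : R) : e.evenShift b * e.evenShift b = b • e.evenShift b := by
  refine e.ext fun ⟨n, i⟩ => ?_
  by_cases he : Even n
  · simp [evenShift_apply, he, Nat.even_add_one]
  · simp [evenShift_apply, he, smul_smul]

lemma oddShift_add_evenShift_apply (a b : R) (n : ℕ) (i : ι) :
    (e.oddShift a + e.evenShift b) (e (n, i)) =
      e (n + 1, i) + alternatingCoeff a b n • e (n, i) := by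
  rcases eq_or_ne n 0 with rfl | hn
  · simp [oddShift_apply, evenShift_apply, alternatingCoeff]
  by_cases he : Even n
  · simp [oddShift_apply, evenShift_apply, alternatingCoeff, hn, he, add_comm]
  · simp [oddShift_apply, evenShift_apply, alternatingCoeff, hn, he]

theorem exists_add_quadratic (a b : R) (u : Module.End R V)
    (hu : ∀ n i, u (e (n, i)) = e (n + 1, i) + alternatingCoeff a b n • e (n, i)) :
    ∃ v w : Module.End R V, u = v + w ∧ v * v = a • v ∧ w * w = b • w :=
  ⟨e.oddShift a, e.evenShift b, e.ext fun ⟨n, i⟩ => by rw [hu, oddShift_add_evenShift_apply],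
    e.oddShift_mul_self a, e.evenShift_mul_self b⟩

end Module.Basis

/-- Every elementary endomorphism `u` splits as `u = v + w` with `v² = a·v`
and `w² = b·w`, for any scalars `a, b`. -/
theorem elementary_eq_add_quadratic (F : Type*) [Field F] (V : Type*) [AddCommGroup V]
    [Module F V] (a b : F) (u : Module.End F V) (hu : IsElementary u) :
    ∃ v w : Module.End F V, u = v + w ∧ v * v = a • v ∧ w * w = b • w :=
  have : Module.Free F[X] (AEval' u) := hu
  (shiftBasis u (alternatingCoeff a b)).exists_add_quadratic a b u (apply_shiftBasis u _)
end

section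
/- Every elementary endomorphism of a vector space over a field is the sum of two square-zero endomorphisms. -/
open Polynomial

namespace Module.Basis

variable {R M ι : Type*} [CommSemiring R] [AddCommMonoid M] [Module R M]

noncomputable def shiftOn (b : Basis (ℕ × ι) R M) (s : ℕ → Prop) [DecidablePred s] :
    Module.End R M :=
  b.constr R fun p => if s p.1 then b (p.1 + 1, p.2) else 0

variable (b : Basis (ℕ × ι) R M) (s : ℕ → Prop) [DecidablePred s]

theorem shiftOn_apply (p : ℕ × ι) :
    b.shiftOn s (b p) = if s p.1 then b (p.1 + 1, p.2) else 0 :=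
  b.constr_basis R _ p

theorem shiftOn_add_shiftOn_not_apply (p : ℕ × ι) :
    (b.shiftOn s + b.shiftOn (¬ s ·)) (b p) = b (p.1 + 1, p.2) := by
  by_cases h : s p.1 <;> simp [shiftOn_apply, h]

theorem shiftOn_mul_self (hs : ∀ n, s n → ¬ s (n + 1)) : b.shiftOn s * b.shiftOn s = 0 := by
  refine b.ext fun p => ?_
  by_cases h : s p.1
  · simp [shiftOn_apply, h, hs _ h]
  · simp [shiftOn_apply, h]

theorem exists_square_zero_add_of_shift (u : Module.End R M)
    (hu : ∀ p, u (b p) = b (p.1 + 1, p.2)) :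
    ∃ v w : Module.End R M, u = v + w ∧ v * v = 0 ∧ w * w = 0 := by
  refine ⟨b.shiftOn Even, b.shiftOn (¬ Even ·), b.ext fun p => ?_, ?_, ?_⟩
  · rw [hu, shiftOn_add_shiftOn_not_apply]
  · exact b.shiftOn_mul_self _ fun n hn => Nat.not_even_iff_odd.mpr hn.add_one
  · exact b.shiftOn_mul_self _ fun n hn => not_not.mpr (Nat.not_even_iff_odd.mp hn).add_one

end Module.Basis

namespace Module.AEval'

variable {R M ι : Type*} [CommSemiring R] [AddCommMonoid M] [Module R M] {u : Module.End R M}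

noncomputable def monomialBasis (b : Basis ι R[X] (AEval' u)) : Basis (ℕ × ι) R M :=
  ((basisMonomials R).smulTower b).map (of u).symm

theorem monomialBasis_apply (b : Basis ι R[X] (AEval' u)) (p : ℕ × ι) :
    monomialBasis b p = (of u).symm (monomial p.1 (1 : R) • b p.2) := by
  simp [monomialBasis, Basis.smulTower_apply, coe_basisMonomials]

theorem apply_monomialBasis (b : Basis ι R[X] (AEval' u)) (p : ℕ × ι) :
    u (monomialBasis b p) = monomialBasis b (p.1 + 1, p.2) := by
  rw [monomialBasis_apply, monomialBasis_apply, ← of_symm_X_smul, smul_smul, X_mul_monomial]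

end Module.AEval'

/-- Every elementary endomorphism is the sum of two square-zero endomorphisms. -/
theorem elementary_sum_two_square_zero (F : Type*) [Field F] (V : Type*) [AddCommGroup V]
    [Module F V] (u : Module.End F V) (hu : IsElementary u) :
    ∃ v w : Module.End F V, u = v + w ∧ v * v = 0 ∧ w * w = 0 := by
  obtain ⟨⟨_, b⟩⟩ := hu
  exact (Module.AEval'.monomialBasis b).exists_square_zero_add_of_shift u
    (Module.AEval'.apply_monomialBasis b)
end

section
/- Every elementary endomorphism of a vector space over a field is the sum of two idempotent endomorphisms. -/
/-!
Freeness identifies `V` with a direct sum of copies of `F[X]` on which `u` acts as multiplication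
by `X`, so it suffices to split multiplication by `X` on `F[X]` into two idempotents and apply the
splitting coordinatewise. In the basis `e n = (X - 1) ^ n` of `F[X]` multiplication by `X` is
`e n ↦ e n + e (n + 1)`; keeping this on even `n` and killing odd `n` gives one idempotent, and the
complementary choice gives the other.
-/

open Polynomial

noncomputable section

namespace Polynomial

variable {R : Type*} [CommRing R]

def basisXSubCPow (c : R) : Module.Basis ℕ R R[X] :=
  (basisMonomials R).map (algEquivAevalXAddC (-c)).toLinearEquiv

@[simp]
theorem basisXSubCPow_apply (c : R) (n : ℕ) : basisXSubCPow c n = (X - C c) ^ n := by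
  simp [basisXSubCPow, ← X_pow_eq_monomial, algEquivAevalXAddC, sub_eq_add_neg]

end Polynomial

namespace Module.Basis

variable {R M : Type*} [Semiring R] [AddCommMonoid M] [Module R M]

theorem exists_isIdempotentElem_add_eq_of_apply_eq_add_succ (b : Basis ℕ R M) (f : Module.End R M)
    (hf : ∀ n, f (b n) = b n + b (n + 1)) :
    ∃ p q : Module.End R M, IsIdempotentElem p ∧ IsIdempotentElem q ∧ p + q = f := by
  -- `constr ℕ` rather than `constr R`, which would need `R` commutative.
  let p := b.constr ℕ fun n => if Even n then f (b n) else 0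
  let q := b.constr ℕ fun n => if Even n then 0 else f (b n)
  have hp_apply (n : ℕ) : p (b n) = if Even n then b n + b (n + 1) else 0 := by
    simp [p, Basis.constr_basis, hf]
  have hq_apply (n : ℕ) : q (b n) = if Even n then 0 else b n + b (n + 1) := by
    simp [q, Basis.constr_basis, hf]
  refine ⟨p, q, b.ext fun n => ?_, b.ext fun n => ?_, b.ext fun n => ?_⟩
  · rcases Nat.even_or_odd n with h | h
    · simp [hp_apply, h, Nat.even_add_one]
    · simp [hp_apply, Nat.not_even_iff_odd.mpr h]
  · rcases Nat.even_or_odd n with h | h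
    · simp [hq_apply, h]
    · simp [hq_apply, Nat.not_even_iff_odd.mpr h, Nat.even_add_one]
  · by_cases h : Even n <;> simp [hp_apply, hq_apply, hf, h]

end Module.Basis

theorem Polynomial.exists_isIdempotentElem_add_eq_mulLeft_X (R : Type*) [CommRing R] :
    ∃ p q : Module.End R R[X], IsIdempotentElem p ∧ IsIdempotentElem q ∧
      p + q = LinearMap.mulLeft R X :=
  (basisXSubCPow (1 : R)).exists_isIdempotentElem_add_eq_of_apply_eq_add_succ _ fun n => by
    simp only [basisXSubCPow_apply, LinearMap.mulLeft_apply, map_one]; ring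

namespace Finsupp

variable {R M : Type*} [Semiring R] [AddCommMonoid M] [Module R M]

@[simps]
def mapRange.endRingHom (ι : Type*) : Module.End R M →+* Module.End R (ι →₀ M) where
  toFun := mapRange.linearMap
  map_one' := mapRange.linearMap_id
  map_mul' f g := mapRange.linearMap_comp f g
  map_zero' := by ext; simp
  map_add' f g := by ext; simp

end Finsupp

theorem Module.Free.exists_ringHom_end_mulLeft_eq_smul (F R M : Type*) [CommSemiring F] [Semiring R]
    [Algebra F R] [AddCommMonoid M] [Module F M] [Module R M] [IsScalarTower F R M]
    [Module.Free R M] :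
    ∃ Φ : Module.End F R →+* Module.End F M, ∀ (r : R) (m : M),
      Φ (LinearMap.mulLeft F r) m = r • m := by
  let e : M ≃ₗ[F] (Module.Free.ChooseBasisIndex R M →₀ R) :=
    (Module.Free.chooseBasis R M).repr.restrictScalars F
  refine ⟨(e.symm.conjAlgEquiv F).toRingHom.comp (Finsupp.mapRange.endRingHom _), fun r m => ?_⟩
  apply e.injective
  ext i
  simp [LinearEquiv.conjAlgEquiv_apply, e]

end

/-- Every elementary endomorphism is the sum of two idempotent endomorphisms. -/
theorem elementary_sum_two_idempotents (F : Type*) [Field F] (V : Type*) [AddCommGroup V]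
    [Module F V] (u : Module.End F V) (hu : IsElementary u) :
    ∃ p q : Module.End F V, u = p + q ∧ p * p = p ∧ q * q = q := by
  obtain ⟨p, q, hp, hq, hpq⟩ := Polynomial.exists_isIdempotentElem_add_eq_mulLeft_X F
  have : Module.Free F[X] (Module.AEval' u) := hu
  obtain ⟨Φ, hΦ⟩ := Module.Free.exists_ringHom_end_mulLeft_eq_smul F F[X] (Module.AEval' u)
  let Ψ := ((Module.AEval'.of u).symm.conjAlgEquiv F).toRingHom.comp Φ
  have hΨ : Ψ (LinearMap.mulLeft F X) = u := by
    ext v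
    simp [Ψ, LinearEquiv.conjAlgEquiv_apply, hΦ]
  exact ⟨Ψ p, Ψ q, by rw [← hΨ, ← hpq, map_add], hp.map Ψ, hq.map Ψ⟩
end

section
/- Let V be an F[t]-module admitting a stratification (V_α)_{α∈D} whose dimension sequence is constant equal to +∞ (i.e., each quotient V_α / Σ_{β<α} V_β is infinite-dimensional over F with a single generator as F[t]-module). Then V is a free F[t]-module. -/
open Polynomial

/-- The sum `Σ_{β<α} V_β` of the earlier terms of a family of submodules. -/
def prevSum {R V : Type*} [CommRing R] [AddCommGroup V] [Module R V]
    {D : Type*} [LinearOrder D] (W : D → Submodule R V) (α : D) : Submodule R V :=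
  ⨆ β, ⨆ _ : β < α, W β

/-- A stratification of a module `V` over `R`, indexed by a well-ordered set `D`:
an increasing family of submodules such that each quotient
`V_α / Σ_{β<α} V_β` is nonzero and cyclic, and whose sum is `V`. -/
def IsStratification {R V : Type*} [CommRing R] [AddCommGroup V] [Module R V]
    {D : Type*} [LinearOrder D] [WellFoundedLT D] (W : D → Submodule R V) : Prop :=
  Monotone W ∧
  (∀ α : D, ∃ x : V ⧸ prevSum W α, x ≠ 0 ∧
    (W α).map (prevSum W α).mkQ = Submodule.span R {x}) ∧
  (⨆ α, W α) = ⊤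

/-!
A cyclic `F[t]`-module killed by a nonzero polynomial `p` is a quotient of `F[t] ⧸ (p)`, hence
finite-dimensional over `F`. So the generator of each successive quotient of the stratification
has zero annihilator. Lifting these generators to `V` gives a family that is triangular with
respect to the stratification: a relation among them vanishes at its largest index modulo the
earlier strata, so the family is linearly independent, and by well-founded induction it spans
every stratum, hence `V`.
-/

theorem Polynomial.finite_span_singleton_of_smul_eq_zero {F M : Type*} [Field F]
    [AddCommGroup M] [Module F M] [Module F[X] M] [IsScalarTower F F[X] M] {x : M} {p : F[X]}
    (hp : p ≠ 0) (hpx : p • x = 0) :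
    Module.Finite F ((Submodule.span F[X] {x}).restrictScalars F) := by
  have : Module.Finite F (F[X] ⧸ Ideal.span {p}) := .of_basis (AdjoinRoot.powerBasis hp).basis
  have hker : Ideal.span {p} ≤ LinearMap.ker (LinearMap.toSpanSingleton F[X] M x) := by
    rwa [Ideal.span_le, Set.singleton_subset_iff]
  rw [← LinearMap.range_toSpanSingleton, ← Submodule.range_liftQ _ _ hker,
    ← LinearMap.range_restrictScalars]
  exact Module.Finite.range _

section
variable {R V D : Type*} [CommRing R] [AddCommGroup V] [Module R V] [LinearOrder D]
  {W : D → Submodule R V} {b : D → V}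

theorem le_prevSum {β α : D} (h : β < α) : W β ≤ prevSum W α :=
  le_iSup₂_of_le β h le_rfl

theorem linearIndependent_of_mkQ_prevSum (hb : ∀ α, b α ∈ W α)
    (htf : ∀ α (r : R), r • (prevSum W α).mkQ (b α) = 0 → r = 0) : LinearIndependent R b := by
  classical
  rw [linearIndependent_iff']
  intro s
  induction s using Finset.induction_on_max with
  | empty => simp
  | insert a s hlt ih =>
    intro g hsum i hi
    have ha : a ∉ s := fun h => lt_irrefl a (hlt a h)
    have hs : ∀ j ∈ s, (prevSum W a).mkQ (b j) = 0 := fun j hj =>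
      (Submodule.Quotient.mk_eq_zero _).2 (le_prevSum (hlt j hj) (hb j))
    have hga : g a = 0 := by
      refine htf a _ ?_
      have := congrArg (prevSum W a).mkQ hsum
      rwa [Finset.sum_insert ha, map_add, map_sum,
        Finset.sum_eq_zero fun j hj => by rw [map_smul, hs j hj, smul_zero], add_zero,
        map_smul, map_zero] at this
    rw [Finset.sum_insert ha, hga, zero_smul, zero_add] at hsum
    rcases Finset.mem_insert.1 hi with rfl | hi
    · exact hga
    · exact ih g hsum i hi

theorem span_range_eq_top_of_mkQ_prevSum [WellFoundedLT D] (hsup : ⨆ α, W α = ⊤)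
    (hgen : ∀ α, (W α).map (prevSum W α).mkQ ≤ Submodule.span R {(prevSum W α).mkQ (b α)}) :
    Submodule.span R (Set.range b) = ⊤ := by
  refine eq_top_iff.2 (hsup ▸ iSup_le fun α => ?_)
  induction α using WellFoundedLT.induction with
  | _ α ih =>
    have h := Submodule.map_le_iff_le_comap.1 (hgen α)
    rw [← Set.image_singleton, ← Submodule.map_span, Submodule.comap_map_mkQ] at h
    refine h.trans (sup_le (iSup₂_le fun β hβ => ih β hβ) ?_)
    exact Submodule.span_mono (Set.singleton_subset_iff.2 ⟨α, rfl⟩)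
end

/-- If an `F[t]`-module `V` admits a stratification all of whose successive
quotients are infinite-dimensional over `F`, then `V` is free. -/
theorem free_of_stratification_infinite_dims (F : Type*) [Field F] (V : Type*)
    [AddCommGroup V] [Module F V] [Module (Polynomial F) V]
    [IsScalarTower F (Polynomial F) V]
    (D : Type*) [LinearOrder D] [WellFoundedLT D]
    (W : D → Submodule (Polynomial F) V) (hW : IsStratification W)
    (hdim : ∀ α : D,
      ¬ Module.Finite F (((W α).map (prevSum W α).mkQ).restrictScalars F)) :
    Module.Free (Polynomial F) V := by
  obtain ⟨-, hcyc, hsup⟩ := hW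
  choose x _ hx using hcyc
  have hlift : ∀ α, ∃ y ∈ W α, (prevSum W α).mkQ y = x α := fun α =>
    (hx α).ge (Submodule.mem_span_singleton_self _)
  choose b hbW hbx using hlift
  have htf : ∀ α (p : F[X]), p • (prevSum W α).mkQ (b α) = 0 → p = 0 := fun α p hp => by
    by_contra hp0
    rw [hbx] at hp
    exact hdim α (hx α ▸ Polynomial.finite_span_singleton_of_smul_eq_zero hp0 hp)
  have hspan := span_range_eq_top_of_mkQ_prevSum hsup fun α => by rw [hx α, hbx]
  exact .of_basis (.mk (linearIndependent_of_mkQ_prevSum hbW htf) hspan.ge)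
end

section
/- Let F be a field of characteristic 2 with more than 2 elements, V a vector space over F, and u a finite-rank endomorphism of V whose trace does not lie in the prime subfield F_2 of F. Then u is not the sum of three idempotent endomorphisms of V. -/
/-!
Let `u = p + q + r`. In characteristic 2, `qr + rq = u² - u - (pu + up)` has finite rank, and
since `qrq = (qr + rq)q - rq`, the images of `W + pW` under `1, q, r, qr, rq` span a
finite-dimensional subspace containing `W` and invariant under `p`, `q`, `r`. On it,
`u² - u` is a sum of anticommutators `ab + ba`, whose traces `2 tr(ab)` vanish; together with
`tr(u²) = tr(u)²` this gives `tr(u)² = tr(u)`, so `tr(u) ∈ {0, 1}`.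
-/

open LinearMap

theorem Matrix.trace_mul_self_of_charTwo {R n : Type*} [CommRing R] [CharP R 2] [Fintype n]
    [DecidableEq n] (M : Matrix n n R) : (M * M).trace = M.trace * M.trace := by
  let offDiag : n × n → R := fun x => if x.1 = x.2 then 0 else M x.1 x.2 * M x.2 x.1
  -- the off-diagonal terms cancel in pairs `(i, j)`, `(j, i)`
  have h_offDiag : ∑ x, offDiag x = 0 := by
    refine Finset.sum_ninvolution Prod.swap (fun x => ?_) (fun x hx => ?_)
      (fun _ => Finset.mem_univ _) Prod.swap_swap
    · by_cases h : x.1 = x.2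
      · simp [offDiag, h]
      · simp only [offDiag, Prod.fst_swap, Prod.snd_swap, if_neg h, if_neg (Ne.symm h),
          mul_comm (M x.2 x.1), CharTwo.add_self_eq_zero]
    · contrapose! hx
      simp [offDiag, show x.1 = x.2 from congrArg Prod.snd hx]
  have h_split : ∀ i j, M i j * M j i = (if i = j then M i i * M i i else 0) + offDiag (i, j) := by
    intro i j
    by_cases h : i = j
    · subst h; simp [offDiag]
    · simp [offDiag, h]
  calc (M * M).trace = ∑ i, ∑ j, M i j * M j i := by simp [Matrix.trace, Matrix.mul_apply]
    _ = ∑ i, M i i * M i i + ∑ x, offDiag x := by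
      rw [Finset.sum_congr rfl fun i _ => Finset.sum_congr rfl fun j _ => h_split i j]
      simp only [Finset.sum_add_distrib, Finset.sum_ite_eq, Finset.mem_univ, if_true,
        Fintype.sum_prod_type]
    _ = M.trace * M.trace := by rw [h_offDiag, add_zero, Matrix.trace, CharTwo.sum_mul_self]; rfl

section Trace

variable {R M : Type*} [CommRing R] [AddCommGroup M] [Module R M]

theorem LinearMap.trace_mul_self_of_charTwo [CharP R 2] (f : Module.End R M) :
    trace R M (f * f) = trace R M f * trace R M f := by
  classical
  by_cases H : ∃ s : Finset M, Nonempty (Module.Basis s R M)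
  · obtain ⟨s, ⟨b⟩⟩ := H
    rw [trace_eq_matrix_trace R b (f * f), trace_eq_matrix_trace R b f, toMatrix_mul,
      Matrix.trace_mul_self_of_charTwo]
  · simp [trace, dif_neg H]

theorem LinearMap.trace_mul_self_of_mem_closure_isIdempotentElem [CharP R 2] {f : Module.End R M}
    (hf : f ∈ AddSubmonoid.closure {e | IsIdempotentElem e}) :
    trace R M (f * f) = trace R M f := by
  induction hf using AddSubmonoid.closure_induction with
  | mem e he => rw [he.eq]
  | zero => simp
  | add a b _ _ ha hb =>
    have hab : (a + b) * (a + b) = a * a + b * b + (a * b + b * a) := by noncomm_ring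
    rw [hab, map_add, map_add, ha, hb, map_add, trace_mul_comm R a b, CharTwo.add_self_eq_zero,
      add_zero, map_add]

theorem LinearMap.trace_restrict_eq_of_range_le {f : Module.End R M} {W X : Submodule R M}
    [Module.Free R W] [Module.Finite R W] [Module.Free R X] [Module.Finite R X]
    (hWX : W ≤ X) (hf : range f ≤ W) (hW : ∀ x ∈ W, f x ∈ W) (hX : ∀ x ∈ X, f x ∈ X) :
    trace R X (f.restrict hX) = trace R W (f.restrict hW) := by
  let g : X →ₗ[R] W := (f ∘ₗ X.subtype).codRestrict W fun x => hf (mem_range_self f x)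
  calc trace R X (f.restrict hX) = trace R X (Submodule.inclusion hWX ∘ₗ g) := rfl
    _ = trace R W (g ∘ₗ Submodule.inclusion hWX) := trace_comp_comm' _ _
    _ = trace R W (f.restrict hW) := rfl

end Trace

theorem IsIdempotentElem.restrict {R M : Type*} [Semiring R] [AddCommMonoid M] [Module R M]
    {f : Module.End R M} (hf : IsIdempotentElem f) {W : Submodule R M} (hW : ∀ x ∈ W, f x ∈ W) :
    IsIdempotentElem (f.restrict hW) :=
  LinearMap.ext fun x => Subtype.ext (LinearMap.congr_fun hf x)

section InvariantSubspace

variable {R V : Type*} [Ring R] [AddCommGroup V] [Module R V]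

theorem Submodule.apply_mem_sup_map_mul_of_isIdempotentElem {e f : Module.End R V}
    (he : IsIdempotentElem e) {W : Submodule R V} (hs : range (e * f + f * e) ≤ W) :
    ∀ x ∈ W ⊔ W.map e ⊔ W.map f ⊔ W.map (e * f) ⊔ W.map (f * e),
      e x ∈ W ⊔ W.map e ⊔ W.map f ⊔ W.map (e * f) ⊔ W.map (f * e) := by
  set X := W ⊔ W.map e ⊔ W.map f ⊔ W.map (e * f) ⊔ W.map (f * e)
  have hW : W ≤ X := le_sup_of_le_left (le_sup_of_le_left (le_sup_of_le_left le_sup_left))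
  have he_mem : ∀ w ∈ W, e w ∈ X := fun w hw =>
    (le_sup_of_le_left (le_sup_of_le_left (le_sup_of_le_left le_sup_right)) : W.map e ≤ X)
      (mem_map_of_mem hw)
  have hef_mem : ∀ w ∈ W, (e * f) w ∈ X := fun w hw =>
    (le_sup_of_le_left le_sup_right : W.map (e * f) ≤ X) (mem_map_of_mem hw)
  have hfe_mem : ∀ w ∈ W, (f * e) w ∈ X := fun w hw =>
    (le_sup_right : W.map (f * e) ≤ X) (mem_map_of_mem hw)
  have hee : ∀ w, e (e w) = e w := LinearMap.congr_fun he
  suffices X ≤ X.comap e from fun x hx => this hx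
  refine sup_le (sup_le (sup_le (sup_le he_mem ?_) ?_) ?_) ?_ <;>
    refine map_le_iff_le_comap.mpr fun w hw => ?_
  · show e (e w) ∈ X
    rw [hee]
    exact he_mem w hw
  · exact hef_mem w hw
  · show e (e (f w)) ∈ X
    rw [hee]
    exact hef_mem w hw
  · have hefe : e (f (e w)) = (e * f + f * e) (e w) - (f * e) w := by
      simp only [LinearMap.add_apply, Module.End.mul_apply, hee, add_sub_cancel_right]
    show e (f (e w)) ∈ X
    rw [hefe]
    exact X.sub_mem (hW (hs (mem_range_self _ _))) (hfe_mem w hw)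

end InvariantSubspace

theorem exists_finiteDimensional_invariant_of_range_add_add_le {F V : Type*} [Field F]
    [CharP F 2] [AddCommGroup V] [Module F V] {p q r : Module.End F V} (hp : IsIdempotentElem p)
    (hq : IsIdempotentElem q) (hr : IsIdempotentElem r) {W : Submodule F V}
    [FiniteDimensional F W] (hW : range (p + q + r) ≤ W) :
    ∃ X : Submodule F V, FiniteDimensional F X ∧ W ≤ X ∧
      (∀ x ∈ X, p x ∈ X) ∧ (∀ x ∈ X, q x ∈ X) ∧ (∀ x ∈ X, r x ∈ X) := by
  set u := p + q + r
  have hqr : q * r + r * q = u * u - u - (p * u + u * p) := by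
    have h2p : p + p = 0 := by rw [← two_smul F p, CharTwo.two_eq_zero, zero_smul]
    calc q * r + r * q
        = u * u - u - (p * u + u * p) + (p + p) - (q * q - q) - (r * r - r) + (p * p - p) := by
          simp only [u]; noncomm_ring
      _ = u * u - u - (p * u + u * p) := by rw [hp.eq, hq.eq, hr.eq, h2p]; abel
  set W₀ := W ⊔ W.map p
  have hu : ∀ x, u x ∈ W := fun x => hW (mem_range_self u x)
  have hs : range (q * r + r * q) ≤ W₀ := by
    rintro _ ⟨x, rfl⟩
    rw [hqr]
    exact W₀.sub_mem (W₀.sub_mem (Submodule.mem_sup_left (hu _)) (Submodule.mem_sup_left (hu _)))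
      (W₀.add_mem (Submodule.mem_sup_right (Submodule.mem_map_of_mem (hu x)))
        (Submodule.mem_sup_left (hu _)))
  set X := W₀ ⊔ W₀.map q ⊔ W₀.map r ⊔ W₀.map (q * r) ⊔ W₀.map (r * q)
  have hWX : W ≤ X := le_sup_of_le_left (le_sup_of_le_left (le_sup_of_le_left
    (le_sup_of_le_left le_sup_left)))
  have hqX : ∀ x ∈ X, q x ∈ X := Submodule.apply_mem_sup_map_mul_of_isIdempotentElem hq hs
  have hrX : ∀ x ∈ X, r x ∈ X := by
    have hX : X = W₀ ⊔ W₀.map r ⊔ W₀.map q ⊔ W₀.map (r * q) ⊔ W₀.map (q * r) := by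
      simp only [X]; ac_rfl
    rw [hX]
    exact Submodule.apply_mem_sup_map_mul_of_isIdempotentElem hr (add_comm (q * r) _ ▸ hs)
  refine ⟨X, inferInstance, hWX, fun x hx => ?_, hqX, hrX⟩
  have hpx : p x = u x - q x - r x := by simp only [u, LinearMap.add_apply]; abel
  rw [hpx]
  exact X.sub_mem (X.sub_mem (hWX (hu x)) (hqX x hx)) (hrX x hx)

theorem not_sum_three_idempotents_of_trace_not_in_prime_subfield_general (F : Type*) [Field F]
    [CharP F 2] (V : Type*) [AddCommGroup V] [Module F V]
    (u : Module.End F V)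
    (W : Submodule F V) (hW : FiniteDimensional F W) (hle : LinearMap.range u ≤ W)
    (hstab : ∀ x ∈ W, u x ∈ W)
    (htr0 : LinearMap.trace F W (u.restrict hstab) ≠ 0)
    (htr1 : LinearMap.trace F W (u.restrict hstab) ≠ 1) :
    ¬ ∃ p q r : Module.End F V,
        p * p = p ∧ q * q = q ∧ r * r = r ∧ u = p + q + r := by
  rintro ⟨p, q, r, hp, hq, hr, rfl⟩
  obtain ⟨X, _, hWX, hpX, hqX, hrX⟩ :=
    exists_finiteDimensional_invariant_of_range_add_add_le hp hq hr hle
  have huX : ∀ x ∈ X, (p + q + r) x ∈ X := fun x hx =>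
    X.add_mem (X.add_mem (hpX x hx) (hqX x hx)) (hrX x hx)
  have h_closure : (p + q + r).restrict huX ∈ AddSubmonoid.closure {e | IsIdempotentElem e} := by
    have h_split :
        (p + q + r).restrict huX = p.restrict hpX + q.restrict hqX + r.restrict hrX := rfl
    rw [h_split]
    exact add_mem (add_mem (AddSubmonoid.subset_closure (IsIdempotentElem.restrict hp hpX))
      (AddSubmonoid.subset_closure (IsIdempotentElem.restrict hq hqX)))
      (AddSubmonoid.subset_closure (IsIdempotentElem.restrict hr hrX))
  have h_idem : IsIdempotentElem (trace F W ((p + q + r).restrict hstab)) := by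
    rw [← trace_restrict_eq_of_range_le hWX hle hstab huX, IsIdempotentElem,
      ← trace_mul_self_of_charTwo, trace_mul_self_of_mem_closure_isIdempotentElem h_closure]
  rcases IsIdempotentElem.iff_eq_zero_or_one.mp h_idem with h | h
  exacts [htr0 h, htr1 h]

/-- Over a field of characteristic 2 with more than two elements, a finite-rank
endomorphism whose trace (computed on a finite-dimensional subspace containing
the image) lies outside the prime subfield `{0, 1}` is not the sum of three
idempotent endomorphisms. -/
theorem not_sum_three_idempotents_of_trace_not_in_prime_subfield (F : Type*) [Field F]
    [CharP F 2] (hF : 2 < Cardinal.mk F) (V : Type*) [AddCommGroup V] [Module F V]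
    (u : Module.End F V)
    (W : Submodule F V) (hW : FiniteDimensional F W) (hle : LinearMap.range u ≤ W)
    (hstab : ∀ x ∈ W, u x ∈ W)
    (htr0 : LinearMap.trace F W (u.restrict hstab) ≠ 0)
    (htr1 : LinearMap.trace F W (u.restrict hstab) ≠ 1) :
    ¬ ∃ p q r : Module.End F V,
        p * p = p ∧ q * q = q ∧ r * r = r ∧ u = p + q + r :=
  not_sum_three_idempotents_of_trace_not_in_prime_subfield_general F V u W hW hle hstab htr0 htr1
end

section
/- Let V be a vector space over a field and let u be a rank-one idempotent endomorphism of V. Then u is not the sum of three square-zero endomorphisms of V. -/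
/-!
Writing `c = u - a - b`, the relation `c² = 0` together with `u² = u`, `a² = b² = 0` gives
`ab + ba = u(a + b - 1) + au + bu`, so the anticommutator `ab + ba` takes values in
`R + aR + bR`, where `R` is the range of `u`. Since `a² = b² = 0`, the only words in `a`, `b`
that could leave `W = R + aR + bR + abR + baR` are `aba = (ab + ba)a` and `bab = (ab + ba)b`,
so `W` is a finite-dimensional subspace invariant under `a`, `b`, `c` and `u`. On `W` the
square-zero maps `a`, `b`, `c` have trace zero, while the idempotent `u` has trace
`rank u = 1`.
-/

open LinearMap Module

theorem mul_add_mul_eq_of_eq_add_add {R : Type*} [Ring R] {u a b c : R} (hu : u * u = u)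
    (ha : a * a = 0) (hb : b * b = 0) (hc : c * c = 0) (h : u = a + b + c) :
    a * b + b * a = u * (a + b - 1) + a * u + b * u := by
  obtain rfl : c = u - a - b := by rw [h]; abel
  rw [← sub_eq_zero]
  calc _ = (u - a - b) * (u - a - b) - (u * u - u) - a * a - b * b := by noncomm_ring
    _ = 0 := by rw [hu, ha, hb, hc]; abel

section

variable {R M : Type*} [CommRing R] [AddCommGroup M] [Module R M]

theorem Module.End.trace_eq_zero_of_mul_self_eq_zero [IsReduced R] {f : End R M}
    (hf : f * f = 0) : trace R M f = 0 :=
  (isNilpotent_trace_of_isNilpotent ⟨2, by rw [sq, hf]⟩).eq_zero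

theorem LinearMap.trace_restrict_eq_zero_of_mul_self_eq_zero [IsReduced R] {f : End R M}
    (hf : f * f = 0) {p : Submodule R M} (hp : ∀ x ∈ p, f x ∈ p) :
    trace R p (f.restrict hp) = 0 := by
  refine Module.End.trace_eq_zero_of_mul_self_eq_zero ?_
  ext x
  simpa using congr($hf x)

variable {a b : End R M} {p : Submodule R M}

theorem Submodule.map_sup_map_mul_le_self_of_mul_self_eq_zero (ha : a * a = 0)
    (hab : range (a * b + b * a) ≤ p ⊔ p.map a ⊔ p.map b) :
    (p ⊔ p.map a ⊔ p.map b ⊔ p.map (a * b) ⊔ p.map (b * a)).map a ≤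
      p ⊔ p.map a ⊔ p.map b ⊔ p.map (a * b) ⊔ p.map (b * a) := by
  have haba : a * b * a = (a * b + b * a) * a := by
    rw [add_mul, mul_assoc b, ha, mul_zero, add_zero]
  simp only [map_sup, ← map_comp, ← Module.End.mul_eq_comp, ← mul_assoc, ha, zero_mul,
    Submodule.map_zero, sup_bot_eq]
  refine sup_le (sup_le ?_ ?_) ?_
  · exact le_sup_right.trans (le_sup_left.trans (le_sup_left.trans le_sup_left))
  · exact le_sup_right.trans le_sup_left
  · rw [haba, Module.End.mul_eq_comp, map_comp]
    exact map_le_range.trans (hab.trans (le_sup_left.trans le_sup_left))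

theorem Submodule.exists_finite_invariant_of_mul_self_eq_zero [Module.Finite R p]
    (ha : a * a = 0) (hb : b * b = 0) (hab : range (a * b + b * a) ≤ p ⊔ p.map a ⊔ p.map b) :
    ∃ W : Submodule R M,
      Module.Finite R W ∧ p ≤ W ∧ (∀ x ∈ W, a x ∈ W) ∧ ∀ x ∈ W, b x ∈ W := by
  have hWba : p ⊔ p.map b ⊔ p.map a ⊔ p.map (b * a) ⊔ p.map (a * b) =
      p ⊔ p.map a ⊔ p.map b ⊔ p.map (a * b) ⊔ p.map (b * a) := by ac_rfl
  set W := p ⊔ p.map a ⊔ p.map b ⊔ p.map (a * b) ⊔ p.map (b * a)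
  have haW : W.map a ≤ W := map_sup_map_mul_le_self_of_mul_self_eq_zero ha hab
  have hbW : W.map b ≤ W := hWba ▸
    map_sup_map_mul_le_self_of_mul_self_eq_zero hb (by rwa [add_comm, sup_right_comm])
  exact ⟨W, inferInstance, le_sup_left.trans (le_sup_left.trans (le_sup_left.trans le_sup_left)),
    fun x hx ↦ haW (mem_map_of_mem hx), fun x hx ↦ hbW (mem_map_of_mem hx)⟩

end

section

variable {K V : Type*} [Field K] [AddCommGroup V] [Module K V] {u : End K V}

theorem IsIdempotentElem.trace_restrict_eq_finrank_range (hu : IsIdempotentElem u)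
    {W : Submodule K V} [FiniteDimensional K W] (hW : range u ≤ W) :
    trace K W (u.restrict fun x _ ↦ hW (mem_range_self u x)) = finrank K (range u) := by
  set uW : End K W := u.restrict fun x _ ↦ hW (mem_range_self u x)
  have huW : IsIdempotentElem uW := by
    ext x
    simpa [uW] using congr($hu.eq x)
  have hmap : W.map u = range u := by
    refine le_antisymm map_le_range ?_
    calc range u = range (u * u) := by rw [hu.eq]
      _ = (range u).map u := range_comp u u
      _ ≤ W.map u := Submodule.map_mono hW
  rw [huW.isProj_range.trace, range_restrict, hmap,
    (Submodule.comapSubtypeEquivOfLe hW).finrank_eq]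

theorem IsIdempotentElem.ne_add_add_of_mul_self_eq_zero (hu : IsIdempotentElem u)
    [FiniteDimensional K (range u)] (hrank : (finrank K (range u) : K) ≠ 0) {a b c : End K V}
    (ha : a * a = 0) (hb : b * b = 0) (hc : c * c = 0) : u ≠ a + b + c := by
  intro huabc
  have hab : range (a * b + b * a) ≤ range u ⊔ (range u).map a ⊔ (range u).map b := by
    rw [mul_add_mul_eq_of_eq_add_add hu.eq ha hb hc huabc]
    exact (range_add_le _ _).trans <| sup_le_sup
      ((range_add_le _ _).trans (sup_le_sup (range_comp_le_range _ _) (range_comp u a).le))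
      (range_comp u b).le
  obtain ⟨W, _, huW, haW, hbW⟩ :=
    Submodule.exists_finite_invariant_of_mul_self_eq_zero ha hb hab
  have hcW : ∀ x ∈ W, c x ∈ W := fun x hx ↦ by
    rw [show c = u - a - b by rw [huabc]; abel]
    exact W.sub_mem (W.sub_mem (huW (mem_range_self u x)) (haW x hx)) (hbW x hx)
  apply hrank
  calc (finrank K (range u) : K) = trace K W (u.restrict fun x _ ↦ huW (mem_range_self u x)) :=
        (hu.trace_restrict_eq_finrank_range huW).symm
    _ = trace K W (a.restrict haW) + trace K W (b.restrict hbW) + trace K W (c.restrict hcW) := by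
        rw [← map_add, ← map_add]
        congr 1
        ext
        simp [huabc]
    _ = 0 := by
        rw [trace_restrict_eq_zero_of_mul_self_eq_zero ha,
          trace_restrict_eq_zero_of_mul_self_eq_zero hb,
          trace_restrict_eq_zero_of_mul_self_eq_zero hc, add_zero, add_zero]

end

/-- A rank-one idempotent endomorphism of a vector space is not the sum of
three square-zero endomorphisms. -/
theorem rank_one_idempotent_not_sum_three_square_zero (F : Type*) [Field F]
    (V : Type*) [AddCommGroup V] [Module F V] (u : Module.End F V)
    (hidem : u * u = u) (hrank : Module.rank F (LinearMap.range u) = 1) :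
    ¬ ∃ a b c : Module.End F V,
        a * a = 0 ∧ b * b = 0 ∧ c * c = 0 ∧ u = a + b + c := by
  rintro ⟨a, b, c, ha, hb, hc, habc⟩
  have : FiniteDimensional F (range u) := Module.finite_of_rank_eq_one hrank
  have hfinrank : finrank F (range u) = 1 := rank_eq_one_iff_finrank_eq_one.mp hrank
  exact IsIdempotentElem.ne_add_add_of_mul_self_eq_zero hidem (by simp [hfinrank]) ha hb hc habc
end
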